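/- arXiv:1808.01528 — 7 statements merged into one kernel-verified Lean document; each statement's English description precedes it below -/
import Mathlib

section
/- For every nonnegative integer j, the liminf as k → ∞ of γ_j(k)/k is at least 1/10, and the limsup as k → ∞ of γ_j(k)/k is at least 1/5 (limits taken over positive integers k, with γ_j(k)/k a real number). -/
/-- The Thue–Morse word, 1-indexed: `tm i` is the parity (0 or 1) of the number of 1's
in the binary expansion of `i - 1`. -/
def tm (i : ℕ) : ℕ := ((Nat.digits 2 (i - 1)).sum) % 2

/-- The `r`-th block (0-indexed) of size `m` of the `j`-fix of the Thue–Morse word: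
the factor `⟨j + r*m + 1, j + (r+1)*m⟩`. -/
def tmBlock (j m r : ℕ) : List ℕ := (List.range m).map fun i => tm (j + r * m + i + 1)

/-- The `j`-fix of the Thue–Morse word of length `k*m` is a `k`-anti-power, i.e. the
`k` blocks `⟨j + r*m + 1, j + (r+1)*m⟩` for `0 ≤ r ≤ k-1` are pairwise distinct. -/
def IsAntipowerJfix (j k m : ℕ) : Prop :=
  ∀ r₁ < k, ∀ r₂ < k, tmBlock j m r₁ = tmBlock j m r₂ → r₁ = r₂

/-- `gammaJ j k` is the least positive integer `m` such that the `j`-fix of the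
Thue–Morse word of length `k*m` is a `k`-anti-power. -/
noncomputable def gammaJ (j k : ℕ) : ℕ := sInf {m : ℕ | 0 < m ∧ IsAntipowerJfix j k m}

/-- `KJ j m` is the least positive integer `k` such that the `j`-fix of the
Thue–Morse word of length `k*m` is not a `k`-anti-power. -/
noncomputable def KJ (j m : ℕ) : ℕ := sInf {k : ℕ | 0 < k ∧ ¬ IsAntipowerJfix j k m}

/-- `GammaJ j k` is the supremum (in `ℕ`, with `sSup ∅ = 0` and `sSup` of an unbounded
set `= 0`) of the set of odd positive integers `m` such that the `j`-fix of the
Thue–Morse word of length `k*m` is not a `k`-anti-power. -/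
noncomputable def GammaJ (j k : ℕ) : ℕ := sSup {m : ℕ | Odd m ∧ ¬ IsAntipowerJfix j k m}

/-- digit-sum parity -/
def sp (n : ℕ) : ℕ := ((Nat.digits 2 n).sum) % 2

lemma sp_lt (n : ℕ) : sp n < 2 := Nat.mod_lt _ (by norm_num)

lemma sp_two_mul_add (n c : ℕ) (hc : c < 2) : sp (2 * n + c) = (sp n + c) % 2 := by
  rcases Nat.eq_zero_or_pos (2 * n + c) with h | h
  · have hn : n = 0 := by omega
    have hc0 : c = 0 := by omega
    simp [sp, hn, hc0]
  · unfold sp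
    rw [Nat.digits_def' (by norm_num : 1 < 2) h]
    have h1 : (2 * n + c) % 2 = c := by omega
    have h2 : (2 * n + c) / 2 = n := by omega
    rw [h1, h2, List.sum_cons]
    omega


lemma sp_two_mul (n : ℕ) : sp (2 * n) = sp n := by
  have h := sp_two_mul_add n 0 (by norm_num)
  simp at h
  have := sp_lt n
  omega

lemma sp_mul_pow_add : ∀ (t q x : ℕ), x < 2 ^ t → sp (q * 2 ^ t + x) = (sp q + sp x) % 2 := by
  intro t
  induction t with
  | zero =>
    intro q x hx
    have hx0 : x = 0 := by omega
    have h1 := sp_lt q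
    subst hx0
    simp [sp]
  | succ t ih =>
    intro q x hx
    have hdm := Nat.div_add_mod x 2
    have hx2 : x / 2 < 2 ^ t := by
      rw [pow_succ] at hx; omega
    have e1 : q * 2 ^ (t + 1) + x = 2 * (q * 2 ^ t + x / 2) + x % 2 := by
      rw [pow_succ]; ring_nf; omega
    rw [e1, sp_two_mul_add _ _ (Nat.mod_lt _ (by norm_num)), ih q (x / 2) hx2]
    have e2 : sp x = (sp (x / 2) + x % 2) % 2 := by
      conv_lhs => rw [← hdm]
      exact sp_two_mul_add _ _ (Nat.mod_lt _ (by norm_num))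
    rw [e2]
    have := sp_lt q; have := sp_lt (x / 2)
    omega

/-- A length-`m` window of the TM word (0-indexed) is determined by the start's
residue mod `2^t` and the digit-sum parities of the two relevant quotients. -/
lemma window_det (t m a b : ℕ) (hm : m ≤ 2 ^ t)
    (h1 : a % 2 ^ t = b % 2 ^ t)
    (h2 : sp (a / 2 ^ t) = sp (b / 2 ^ t))
    (h3 : sp (a / 2 ^ t + 1) = sp (b / 2 ^ t + 1)) :
    ∀ i < m, sp (a + i) = sp (b + i) := by
  intro i hi
  have hpos : 0 < 2 ^ t := Nat.pow_pos (by norm_num)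
  have hra : a = a / 2 ^ t * 2 ^ t + a % 2 ^ t := by rw [Nat.mul_comm] at *; exact (Nat.div_add_mod a (2 ^ t)).symm.trans (by ring)
  have hrb : b = b / 2 ^ t * 2 ^ t + b % 2 ^ t := by rw [Nat.mul_comm] at *; exact (Nat.div_add_mod b (2 ^ t)).symm.trans (by ring)
  set r := a % 2 ^ t with hr
  have hrlt : r < 2 ^ t := Nat.mod_lt _ hpos
  rcases lt_or_ge (r + i) (2 ^ t) with hcase | hcase
  · have ea : a + i = a / 2 ^ t * 2 ^ t + (r + i) := by omega
    have eb : b + i = b / 2 ^ t * 2 ^ t + (r + i) := by omega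
    rw [ea, eb, sp_mul_pow_add t _ _ hcase, sp_mul_pow_add t _ _ hcase, h2]
  · have hlt : r + i - 2 ^ t < 2 ^ t := by omega
    have ea : a + i = (a / 2 ^ t + 1) * 2 ^ t + (r + i - 2 ^ t) := by
      have : (a / 2 ^ t + 1) * 2 ^ t = a / 2 ^ t * 2 ^ t + 2 ^ t := by ring
      omega
    have eb : b + i = (b / 2 ^ t + 1) * 2 ^ t + (r + i - 2 ^ t) := by
      have : (b / 2 ^ t + 1) * 2 ^ t = b / 2 ^ t * 2 ^ t + 2 ^ t := by ring
      omega
    rw [ea, eb, sp_mul_pow_add t _ _ hlt, sp_mul_pow_add t _ _ hlt, h3]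

/-- If two adjacent TM letters are equal, the first position is odd. -/
lemma adj_eq_odd (n : ℕ) (h : sp (n + 1) = sp n) : n % 2 = 1 := by
  by_contra hodd
  have hn : n % 2 = 0 := by omega
  obtain ⟨c, hc⟩ : ∃ c, n = 2 * c := ⟨n / 2, by omega⟩
  subst hc
  have h1 : sp (2 * c + 1) = (sp c + 1) % 2 := sp_two_mul_add c 1 (by norm_num)
  have h2 : sp (2 * c) = sp c := sp_two_mul c
  have := sp_lt c
  omega

/-- In any window of 5 consecutive TM letters there is an adjacent equal pair. -/
lemma exists_adj (a : ℕ) : ∃ x ≤ 3, sp (a + x + 1) = sp (a + x) := by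
  set c := a / 2 with hc
  have hca : a = 2 * c ∨ a = 2 * c + 1 := by omega
  have k1 : sp (2 * c + 1) = (sp c + 1) % 2 := sp_two_mul_add c 1 (by norm_num)
  have k2 : sp (2 * c + 2) = sp (c + 1) := by
    have : 2 * c + 2 = 2 * (c + 1) := by ring
    rw [this, sp_two_mul]
  have k3 : sp (2 * c + 3) = (sp (c + 1) + 1) % 2 := by
    have : 2 * c + 3 = 2 * (c + 1) + 1 := by ring
    rw [this]; exact sp_two_mul_add (c + 1) 1 (by norm_num)
  have k4 : sp (2 * c + 4) = sp (c + 2) := by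
    have : 2 * c + 4 = 2 * (c + 2) := by ring
    rw [this, sp_two_mul]
  have hsc := sp_lt c; have hsc1 := sp_lt (c + 1); have hsc2 := sp_lt (c + 2)
  rcases Nat.decEq (sp (c + 1)) (sp c) with hne | heq
  · -- sp (c+1) ≠ sp c : pair at 2c+1
    have hpair : sp (2 * c + 2) = sp (2 * c + 1) := by omega
    rcases hca with h | h
    · exact ⟨1, by norm_num, by rw [h]; convert hpair using 2 <;> ring⟩
    · exact ⟨0, by norm_num, by rw [h]; convert hpair using 2 <;> ring⟩
  · -- sp (c+1) = sp c : then c is odd, so c+1 even, so sp (c+2) ≠ sp (c+1)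
    have hcodd : c % 2 = 1 := adj_eq_odd c heq
    have hne2 : sp (c + 2) ≠ sp (c + 1) := by
      intro habs
      have := adj_eq_odd (c + 1) habs
      omega
    have hpair : sp (2 * c + 4) = sp (2 * c + 3) := by omega
    rcases hca with h | h
    · exact ⟨3, by norm_num, by rw [h]; convert hpair using 2 <;> ring⟩
    · exact ⟨2, by norm_num, by rw [h]; convert hpair using 2 <;> ring⟩

/-- Equal TM windows of length ≥ 5 start at positions of the same parity. -/
lemma window_mod_two (a b m : ℕ) (hm : 5 ≤ m)
    (h : ∀ i < m, sp (a + i) = sp (b + i)) : a % 2 = b % 2 := by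
  obtain ⟨x, hx3, hpair⟩ := exists_adj a
  have ha : (a + x) % 2 = 1 := adj_eq_odd _ hpair
  have hb1 : sp (b + x) = sp (a + x) := (h x (by omega)).symm
  have hb2 : sp (b + (x + 1)) = sp (a + (x + 1)) := (h (x + 1) (by omega)).symm
  have hpb : sp (b + x + 1) = sp (b + x) := by
    have e1 : b + (x + 1) = b + x + 1 := by ring
    have e2 : a + (x + 1) = a + x + 1 := by ring
    rw [← e1, hb2, e2, hpair, hb1]
  have hb : (b + x) % 2 = 1 := adj_eq_odd _ hpb
  omega

lemma mod_double (x c e : ℕ) (hc : c < 2) (he : 0 < e) :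
    (2 * x + c) % (2 * e) = 2 * (x % e) + c := by
  have hx : x = e * (x / e) + x % e := (Nat.div_add_mod x e).symm
  have hlt : x % e < e := Nat.mod_lt _ he
  have e1 : 2 * x + c = (2 * (x % e) + c) + (x / e) * (2 * e) := by
    conv_lhs => rw [hx]
    ring
  rw [e1, Nat.add_mul_mod_self_right, Nat.mod_eq_of_lt (by omega)]

/-- Recognizability: equal long TM windows start at congruent positions mod `2^t`. -/
lemma recog : ∀ t a b m, 6 * 2 ^ t ≤ m + 2 →
    (∀ i < m, sp (a + i) = sp (b + i)) → a % 2 ^ t = b % 2 ^ t := by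
  intro t
  induction t with
  | zero => intro a b m _ _; simp [Nat.mod_one]
  | succ t ih =>
    intro a b m hm h
    have hpow : (1:ℕ) ≤ 2 ^ t := Nat.one_le_two_pow
    have hm12 : 12 * 2 ^ t ≤ m + 2 := by
      have : 6 * 2 ^ (t + 1) = 12 * 2 ^ t := by ring
      omega
    have hm5 : 5 ≤ m := by omega
    have hp2 : a % 2 = b % 2 := window_mod_two a b m hm5 h
    have hps : (2:ℕ) ^ (t + 1) = 2 * 2 ^ t := by ring
    rcases Nat.eq_zero_or_pos (a % 2) with hpar | hpar
    · -- both even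
      have hb2 : b % 2 = 0 := by omega
      have h' : ∀ y < m / 2, sp (a / 2 + y) = sp (b / 2 + y) := by
        intro y hy
        have e1 : 2 * (a / 2 + y) = a + 2 * y := by omega
        have e2 : 2 * (b / 2 + y) = b + 2 * y := by omega
        rw [← sp_two_mul (a / 2 + y), ← sp_two_mul (b / 2 + y), e1, e2]
        exact h (2 * y) (by omega)
      have hmih : 6 * 2 ^ t ≤ m / 2 + 2 := by omega
      have := ih (a / 2) (b / 2) (m / 2) hmih h'
      have ea : a % 2 ^ (t + 1) = 2 * (a / 2 % 2 ^ t) + 0 := by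
        rw [hps, ← mod_double _ 0 _ (by norm_num) (by omega)]
        congr 1; omega
      have eb : b % 2 ^ (t + 1) = 2 * (b / 2 % 2 ^ t) + 0 := by
        rw [hps, ← mod_double _ 0 _ (by norm_num) (by omega)]
        congr 1; omega
      rw [ea, eb, this]
    · -- both odd
      have ha2 : a % 2 = 1 := by omega
      have hb2 : b % 2 = 1 := by omega
      have h' : ∀ y < (m - 1) / 2, sp (a / 2 + 1 + y) = sp (b / 2 + 1 + y) := by
        intro y hy
        have e1 : 2 * (a / 2 + 1 + y) = a + (1 + 2 * y) := by omega
        have e2 : 2 * (b / 2 + 1 + y) = b + (1 + 2 * y) := by omega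
        rw [← sp_two_mul (a / 2 + 1 + y), ← sp_two_mul (b / 2 + 1 + y), e1, e2]
        exact h (1 + 2 * y) (by omega)
      have hmih : 6 * 2 ^ t ≤ (m - 1) / 2 + 2 := by omega
      have hmod := ih (a / 2 + 1) (b / 2 + 1) ((m - 1) / 2) hmih h'
      have hcancel : a / 2 % 2 ^ t = b / 2 % 2 ^ t := by
        have := Nat.ModEq.add_right_cancel' 1 (hmod : (a / 2 + 1) ≡ (b / 2 + 1) [MOD 2 ^ t])
        exact this
      have ea : a % 2 ^ (t + 1) = 2 * (a / 2 % 2 ^ t) + 1 := by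
        rw [hps, ← mod_double _ 1 _ (by norm_num) (by omega)]
        congr 1; omega
      have eb : b % 2 ^ (t + 1) = 2 * (b / 2 % 2 ^ t) + 1 := by
        rw [hps, ← mod_double _ 1 _ (by norm_num) (by omega)]
        congr 1; omega
      rw [ea, eb, hcancel]

lemma tm_succ (x : ℕ) : tm (x + 1) = sp x := rfl

lemma tmBlock_eq_iff (j m r₁ r₂ : ℕ) :
    tmBlock j m r₁ = tmBlock j m r₂ ↔
      ∀ i < m, sp (j + r₁ * m + i) = sp (j + r₂ * m + i) := by
  constructor
  · intro h i hi
    have := congrArg (fun l : List ℕ => l[i]?) h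
    simp only [tmBlock, List.getElem?_map, List.getElem?_range, hi, if_pos] at this
    simpa [tm_succ, hi] using this
  · intro h
    unfold tmBlock
    apply List.map_congr_left
    intro i hi
    rw [List.mem_range] at hi
    rw [tm_succ, tm_succ]
    exact h i hi

/-- Pigeonhole: the TM word has at most `4 * 2^t` distinct factors of length `≤ 2^t`,
so with more than that many blocks two coincide. -/
lemma not_anti (j k m t : ℕ) (hm : m ≤ 2 ^ t) (hk : 4 * 2 ^ t < k) :
    ¬ IsAntipowerJfix j k m := by
  intro h
  have hpos : 0 < 2 ^ t := Nat.pow_pos (by norm_num)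
  set F : Fin k → Fin (2 ^ t) × Fin 2 × Fin 2 := fun r =>
    (⟨(j + r.1 * m) % 2 ^ t, Nat.mod_lt _ hpos⟩,
     ⟨sp ((j + r.1 * m) / 2 ^ t), sp_lt _⟩,
     ⟨sp ((j + r.1 * m) / 2 ^ t + 1), sp_lt _⟩) with hF
  have hcard : Fintype.card (Fin (2 ^ t) × Fin 2 × Fin 2) < Fintype.card (Fin k) := by
    simp [Fintype.card_prod]
    omega
  obtain ⟨r₁, r₂, hne, heq⟩ := Fintype.exists_ne_map_eq_of_card_lt F hcard
  have h1 : (j + r₁.1 * m) % 2 ^ t = (j + r₂.1 * m) % 2 ^ t := by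
    have := congrArg (fun p => p.1.1) heq; simpa [hF] using this
  have h2 : sp ((j + r₁.1 * m) / 2 ^ t) = sp ((j + r₂.1 * m) / 2 ^ t) := by
    have := congrArg (fun p => p.2.1.1) heq; simpa [hF] using this
  have h3 : sp ((j + r₁.1 * m) / 2 ^ t + 1) = sp ((j + r₂.1 * m) / 2 ^ t + 1) := by
    have := congrArg (fun p => p.2.2.1) heq; simpa [hF] using this
  have hw := window_det t m _ _ hm h1 h2 h3
  have hb : tmBlock j m r₁.1 = tmBlock j m r₂.1 := (tmBlock_eq_iff j m r₁.1 r₂.1).2 hw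
  exact hne (Fin.ext (h r₁.1 r₁.2 r₂.1 r₂.2 hb))

lemma anti_exists (j k : ℕ) (hk : 0 < k) :
    ∃ m, 0 < m ∧ m ≤ 13 * k ∧ IsAntipowerJfix j k m := by
  set t := Nat.clog 2 k with ht
  have hle : k ≤ 2 ^ t := Nat.le_pow_clog (by norm_num) k
  have hub : 2 ^ t ≤ 2 * k := by
    rcases Nat.lt_or_ge k 2 with h2 | h2
    · have hk1 : k = 1 := by omega
      subst hk1
      simp [ht, Nat.clog_one_right]
    · have ht1 : 1 ≤ t := by
        by_contra hc
        push_neg at hc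
        interval_cases t
        simp at hle
        omega
      have hlt := Nat.pow_pred_clog_lt_self (b := 2) (by norm_num) (x := k) h2
      rw [← ht] at hlt
      rw [Nat.pred_eq_sub_one] at hlt
      have e : 2 ^ t = 2 * 2 ^ (t - 1) := by
        rw [← pow_succ']
        congr 1
        omega
      omega
  refine ⟨6 * 2 ^ t + 1, by positivity, by omega, ?_⟩
  -- key: equal blocks imply congruent starts mod 2^t, and m odd forces block indices equal
  have key : ∀ r₁ r₂, r₁ ≤ r₂ → r₂ < k →
      tmBlock j (6 * 2 ^ t + 1) r₁ = tmBlock j (6 * 2 ^ t + 1) r₂ → r₁ = r₂ := by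
    intro r₁ r₂ hle12 hr2 hb
    set m := 6 * 2 ^ t + 1 with hmdef
    have hw := (tmBlock_eq_iff j m r₁ r₂).1 hb
    have hmod : (j + r₁ * m) % 2 ^ t = (j + r₂ * m) % 2 ^ t :=
      recog t (j + r₁ * m) (j + r₂ * m) m (by omega) hw
    have hab : j + r₁ * m ≤ j + r₂ * m := by
      have := Nat.mul_le_mul_right m hle12
      omega
    have hdvd : 2 ^ t ∣ (j + r₂ * m) - (j + r₁ * m) :=
      (Nat.modEq_iff_dvd' hab).1 hmod
    have hdiff : (j + r₂ * m) - (j + r₁ * m) = (r₂ - r₁) * m := by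
      have := Nat.sub_mul r₂ r₁ m
      omega
    rw [hdiff] at hdvd
    have hodd : ¬ (2 ∣ m) := by
      intro ⟨c, hc⟩
      omega
    have hcop : Nat.Coprime (2 ^ t) m :=
      Nat.Coprime.pow_left t ((Nat.prime_two.coprime_iff_not_dvd).mpr hodd)
    have hdvd2 : 2 ^ t ∣ r₂ - r₁ := hcop.dvd_of_dvd_mul_right hdvd
    rcases Nat.eq_zero_or_pos (r₂ - r₁) with hz | hp
    · omega
    · have := Nat.le_of_dvd hp hdvd2
      omega
  intro r₁ h1 r₂ h2 hb
  rcases le_total r₁ r₂ with h | h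
  · exact key r₁ r₂ h h2 hb
  · exact (key r₂ r₁ h h1 hb.symm).symm

lemma gamma_spec (j k : ℕ) (hk : 0 < k) :
    0 < gammaJ j k ∧ IsAntipowerJfix j k (gammaJ j k) ∧ gammaJ j k ≤ 13 * k := by
  obtain ⟨m, hm0, hm13, hma⟩ := anti_exists j k hk
  have hne : {m : ℕ | 0 < m ∧ IsAntipowerJfix j k m}.Nonempty := ⟨m, hm0, hma⟩
  have hmem := Nat.sInf_mem hne
  have hle : gammaJ j k ≤ m := Nat.sInf_le ⟨hm0, hma⟩
  exact ⟨hmem.1, hmem.2, le_trans hle hm13⟩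

lemma gamma_gt (j k t : ℕ) (h : 4 * 2 ^ t < k) : 2 ^ t < gammaJ j k := by
  have hk : 0 < k := by omega
  obtain ⟨hpos, hanti, _⟩ := gamma_spec j k hk
  by_contra hc
  push_neg at hc
  exact not_anti j k _ t hc h hanti

lemma lb_all (j k : ℕ) (hk : 0 < k) : k ≤ 10 * gammaJ j k := by
  rcases le_or_gt k 10 with h10 | h10
  · have := (gamma_spec j k hk).1
    omega
  · set L := Nat.log 2 (k - 1) with hL
    have h1 : 2 ^ L ≤ k - 1 := Nat.pow_log_le_self 2 (by omega)
    have h2 : k - 1 < 2 ^ (L + 1) := Nat.lt_pow_succ_log_self (by norm_num) _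
    have hL2 : 2 ≤ L := by
      by_contra hc
      push_neg at hc
      interval_cases L <;> omega
    obtain ⟨u, hu⟩ : ∃ u, L = u + 2 := ⟨L - 2, by omega⟩
    have e1 : 2 ^ L = 4 * 2 ^ u := by rw [hu]; ring
    have hg := gamma_gt j k u (by omega)
    have e2 : (2:ℕ) ^ (L + 1) = 2 * 2 ^ L := by ring
    omega

theorem gamma_liminf_limsup_lower' (j : ℕ) :
    (1 / 10 : ℝ) ≤ Filter.liminf (fun k : ℕ => (gammaJ j k : ℝ) / k) Filter.atTop ∧
    (1 / 5 : ℝ) ≤ Filter.limsup (fun k : ℕ => (gammaJ j k : ℝ) / k) Filter.atTop := by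
  set f : ℕ → ℝ := fun k : ℕ => (gammaJ j k : ℝ) / k with hf
  have hb13 : ∀ᶠ k in Filter.atTop, f k ≤ 13 := by
    filter_upwards [Filter.eventually_ge_atTop 1] with k hk
    have h := (gamma_spec j k (by omega)).2.2
    have hk0 : (0:ℝ) < k := by positivity
    rw [hf]
    rw [div_le_iff₀ hk0]
    calc (gammaJ j k : ℝ) ≤ 13 * k := by exact_mod_cast h
    _ = 13 * k := by ring
  have hbdd : Filter.IsBoundedUnder (· ≤ ·) Filter.atTop f := ⟨13, Filter.eventually_map.2 hb13⟩
  have h10 : ∀ᶠ k in Filter.atTop, (1 / 10 : ℝ) ≤ f k := by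
    filter_upwards [Filter.eventually_ge_atTop 1] with k hk
    have h := lb_all j k (by omega)
    have hk0 : (0:ℝ) < k := by positivity
    rw [hf, le_div_iff₀ hk0]
    have : (k:ℝ) ≤ 10 * gammaJ j k := by exact_mod_cast h
    linarith
  have h5 : ∃ᶠ k in Filter.atTop, (1 / 5 : ℝ) ≤ f k := by
    rw [Filter.frequently_atTop]
    intro n
    refine ⟨5 * 2 ^ n, by have := Nat.lt_two_pow_self (n := n); omega, ?_⟩
    have hg := gamma_gt j (5 * 2 ^ n) n (by have h := Nat.one_le_two_pow (n := n); omega)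
    have hk0 : (0:ℝ) < (5 * 2 ^ n : ℕ) := by positivity
    rw [hf, le_div_iff₀ hk0]
    have : ((5 * 2 ^ n : ℕ) : ℝ) ≤ 5 * gammaJ j (5 * 2 ^ n) := by
      exact_mod_cast (by omega : (5 * 2 ^ n : ℕ) ≤ 5 * gammaJ j (5 * 2 ^ n))
    linarith
  constructor
  · exact Filter.le_liminf_of_le (hbdd.isCoboundedUnder_ge) h10
  · exact Filter.le_limsup_of_frequently_le h5 hbdd

theorem gamma_liminf_limsup_lower (j : ℕ) :
    (1 / 10 : ℝ) ≤ Filter.liminf (fun k : ℕ => (gammaJ j k : ℝ) / k) Filter.atTop ∧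
    (1 / 5 : ℝ) ≤ Filter.limsup (fun k : ℕ => (gammaJ j k : ℝ) / k) Filter.atTop := by
  exact gamma_liminf_limsup_lower' j
end

section
/- For every nonnegative integer j, the liminf as k → ∞ of γ_j(k)/k is at most 9/10, and the limsup as k → ∞ of γ_j(k)/k is at most 3/2 (limits taken over positive integers k, with γ_j(k)/k a real number). -/
namespace TMAux

/-- 0-indexed Thue–Morse sequence. -/
def Tm (n : ℕ) : ℕ := ((Nat.digits 2 n).sum) % 2

lemma Tm_le_one (n : ℕ) : Tm n ≤ 1 := Nat.lt_succ_iff.mp (Nat.mod_lt _ (by norm_num))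

lemma Tm_zero : Tm 0 = 0 := by simp [Tm]

lemma Tm_two_mul (n : ℕ) : Tm (2 * n) = Tm n := by
  rcases Nat.eq_zero_or_pos n with h | h
  · simp [h]
  · unfold Tm
    rw [Nat.digits_def' (by norm_num : 1 < 2) (by omega : 0 < 2 * n)]
    simp [Nat.mul_div_cancel_left _ (by norm_num : 0 < 2), Nat.mul_mod_right]

lemma Tm_two_mul_add_one (n : ℕ) : Tm (2 * n + 1) = 1 - Tm n := by
  unfold Tm
  rw [Nat.digits_def' (by norm_num : 1 < 2) (by omega : 0 < 2 * n + 1)]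
  have h1 : (2 * n + 1) % 2 = 1 := by omega
  have h2 : (2 * n + 1) / 2 = n := by omega
  rw [h1, h2]
  simp only [List.sum_cons]
  omega

lemma Tm_one : Tm 1 = 1 := by
  have := Tm_two_mul_add_one 0
  simpa [Tm_zero] using this

lemma no_three (n : ℕ) (h1 : Tm n = Tm (n + 1)) (h2 : Tm (n + 1) = Tm (n + 2)) : False := by
  rcases Nat.even_or_odd n with ⟨y, hy⟩ | ⟨y, hy⟩
  · subst hy
    have e1 : Tm (y + y) = Tm y := by rw [show y + y = 2 * y by ring, Tm_two_mul]
    have e2 : Tm (y + y + 1) = 1 - Tm y := by rw [show y + y = 2 * y by ring, Tm_two_mul_add_one]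
    have := Tm_le_one y
    omega
  · subst hy
    have e1 : Tm (2 * y + 1 + 1) = Tm (y + 1) := by
      rw [show 2 * y + 1 + 1 = 2 * (y + 1) by ring, Tm_two_mul]
    have e2 : Tm (2 * y + 1 + 2) = 1 - Tm (y + 1) := by
      rw [show 2 * y + 1 + 2 = 2 * (y + 1) + 1 by ring, Tm_two_mul_add_one]
    have := Tm_le_one (y + 1)
    omega

/-- L1: adding a high power of two flips the Thue–Morse value. -/
lemma L1 : ∀ q w, w < 2 ^ q → Tm (w + 2 ^ q) = 1 - Tm w := by
  intro q
  induction q with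
  | zero =>
    intro w hw
    interval_cases w
    simp [Tm_one, Tm_zero]
  | succ q ih =>
    intro w hw
    rcases Nat.even_or_odd w with ⟨u, hu⟩ | ⟨u, hu⟩
    · subst hu
      have hu2 : u < 2 ^ q := by
        have : 2 ^ (q + 1) = 2 * 2 ^ q := by ring
        omega
      have e1 : Tm (u + u + 2 ^ (q + 1)) = Tm (u + 2 ^ q) := by
        rw [show u + u + 2 ^ (q + 1) = 2 * (u + 2 ^ q) by ring, Tm_two_mul]
      have e2 : Tm (u + u) = Tm u := by rw [show u + u = 2 * u by ring, Tm_two_mul]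
      rw [e1, e2, ih u hu2]
    · subst hu
      have hu2 : u < 2 ^ q := by
        have : 2 ^ (q + 1) = 2 * 2 ^ q := by ring
        omega
      have e1 : Tm (2 * u + 1 + 2 ^ (q + 1)) = 1 - Tm (u + 2 ^ q) := by
        rw [show 2 * u + 1 + 2 ^ (q + 1) = 2 * (u + 2 ^ q) + 1 by ring, Tm_two_mul_add_one]
      have e2 : Tm (2 * u + 1) = 1 - Tm u := Tm_two_mul_add_one u
      rw [e1, e2, ih u hu2]

/-- L2: adding `3·2^q` preserves the Thue–Morse value on `[0, 2^(q+1))`. -/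
lemma L2 : ∀ q w, w < 2 ^ (q + 1) → Tm (w + 3 * 2 ^ q) = Tm w := by
  intro q
  induction q with
  | zero =>
    intro w hw
    have h2 : Tm 2 = 1 := by
      have := Tm_two_mul 1; simpa [Tm_one] using this
    have h3 : Tm 3 = 0 := by
      have := Tm_two_mul_add_one 1; simpa [Tm_one] using this
    have h4 : Tm 4 = 1 := by
      have := Tm_two_mul 2; simpa [h2] using this
    interval_cases w
    · rw [show (0 : ℕ) + 3 * 2 ^ 0 = 3 by norm_num, h3, Tm_zero]
    · rw [show (1 : ℕ) + 3 * 2 ^ 0 = 4 by norm_num, h4, Tm_one]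
  | succ q ih =>
    intro w hw
    rcases Nat.even_or_odd w with ⟨u, hu⟩ | ⟨u, hu⟩
    · subst hu
      have hu2 : u < 2 ^ (q + 1) := by
        have : 2 ^ (q + 1 + 1) = 2 * 2 ^ (q + 1) := by ring
        omega
      have e1 : Tm (u + u + 3 * 2 ^ (q + 1)) = Tm (u + 3 * 2 ^ q) := by
        rw [show u + u + 3 * 2 ^ (q + 1) = 2 * (u + 3 * 2 ^ q) by ring, Tm_two_mul]
      have e2 : Tm (u + u) = Tm u := by rw [show u + u = 2 * u by ring, Tm_two_mul]
      rw [e1, e2, ih u hu2]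
    · subst hu
      have hu2 : u < 2 ^ (q + 1) := by
        have : 2 ^ (q + 1 + 1) = 2 * 2 ^ (q + 1) := by ring
        omega
      have e1 : Tm (2 * u + 1 + 3 * 2 ^ (q + 1)) = 1 - Tm (u + 3 * 2 ^ q) := by
        rw [show 2 * u + 1 + 3 * 2 ^ (q + 1) = 2 * (u + 3 * 2 ^ q) + 1 by ring,
          Tm_two_mul_add_one]
      rw [e1, Tm_two_mul_add_one, ih u hu2]

/-- No four consecutive agreements at an odd distance. -/
lemma no4win (a d : ℕ) (hd : d % 2 = 1) (h : ∀ i < 4, Tm (a + i) = Tm (a + i + d)) :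
    False := by
  have alt : ∀ i < 3, Tm (a + i) ≠ Tm (a + i + 1) := by
    intro i hi heq
    have h' := h (i + 1) (by omega)
    rw [show a + (i + 1) = a + i + 1 by ring] at h'
    have heq2 : Tm (a + i + d) = Tm (a + i + 1 + d) :=
      ((h i (by omega)).symm.trans heq).trans h'
    rcases Nat.even_or_odd (a + i) with ⟨y, hy⟩ | ⟨y, hy⟩
    · -- a+i = 2y even : Tm(2y) = Tm(2y+1) impossible
      have e1 : Tm (a + i) = Tm y := by rw [hy, show y + y = 2 * y by ring, Tm_two_mul]
      have e2 : Tm (a + i + 1) = 1 - Tm y := by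
        rw [hy, show y + y + 1 = 2 * y + 1 by ring, Tm_two_mul_add_one]
      have := Tm_le_one y
      omega
    · -- a+i odd, so a+i+d even
      obtain ⟨z, hz⟩ : ∃ z, a + i + d = 2 * z := by
        refine ⟨(a + i + d) / 2, ?_⟩
        omega
      have e1 : Tm (a + i + d) = Tm z := by rw [hz, Tm_two_mul]
      have e2 : Tm (a + i + d + 1) = 1 - Tm z := by
        rw [hz, Tm_two_mul_add_one]
      have e3 : a + i + 1 + d = a + i + d + 1 := by ring
      rw [e3] at heq2
      have := Tm_le_one z
      omega
  -- now use the odd side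
  rcases Nat.even_or_odd a with ⟨y, hy⟩ | ⟨y, hy⟩
  · -- a even, a + d odd
    obtain ⟨z, hz⟩ : ∃ z, a + d = 2 * z + 1 := by
      refine ⟨(a + d) / 2, ?_⟩
      omega
    have alt' : ∀ i < 3, Tm (a + i + d) ≠ Tm (a + i + 1 + d) := by
      intro i hi heq
      have h' := h (i + 1) (by omega)
      rw [show a + (i + 1) = a + i + 1 by ring] at h'
      exact alt i hi (((h i (by omega)).trans heq).trans h'.symm)
    have k0 : Tm (a + d) = 1 - Tm z := by rw [hz, Tm_two_mul_add_one]
    have k1 : Tm (a + d + 1) = Tm (z + 1) := by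
      rw [hz, show 2 * z + 1 + 1 = 2 * (z + 1) by ring, Tm_two_mul]
    have k2 : Tm (a + d + 2) = 1 - Tm (z + 1) := by
      rw [hz, show 2 * z + 1 + 2 = 2 * (z + 1) + 1 by ring, Tm_two_mul_add_one]
    have k3 : Tm (a + d + 3) = Tm (z + 2) := by
      rw [hz, show 2 * z + 1 + 3 = 2 * (z + 2) by ring, Tm_two_mul]
    have a0 := alt' 0 (by omega)
    have a2 := alt' 2 (by omega)
    have r0 : a + 0 + d = a + d := by ring
    have r1 : a + 0 + 1 + d = a + d + 1 := by ring
    have r2 : a + 2 + d = a + d + 2 := by ring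
    have r3 : a + 2 + 1 + d = a + d + 3 := by ring
    rw [r0, r1] at a0
    rw [r2, r3] at a2
    have h1 : Tm (z + 1) = Tm z := by
      have := Tm_le_one z; have := Tm_le_one (z + 1); omega
    have h2 : Tm (z + 2) = Tm (z + 1) := by
      have := Tm_le_one (z + 1); have := Tm_le_one (z + 2); omega
    exact no_three z h1.symm h2.symm
  · -- a odd
    have k0 : Tm a = 1 - Tm y := by rw [hy, Tm_two_mul_add_one]
    have k1 : Tm (a + 1) = Tm (y + 1) := by
      rw [hy, show 2 * y + 1 + 1 = 2 * (y + 1) by ring, Tm_two_mul]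
    have k2 : Tm (a + 2) = 1 - Tm (y + 1) := by
      rw [hy, show 2 * y + 1 + 2 = 2 * (y + 1) + 1 by ring, Tm_two_mul_add_one]
    have k3 : Tm (a + 3) = Tm (y + 2) := by
      rw [hy, show 2 * y + 1 + 3 = 2 * (y + 2) by ring, Tm_two_mul]
    have a0 := alt 0 (by omega)
    have a2 := alt 2 (by omega)
    have r0 : a + 0 = a := by ring
    rw [r0] at a0
    have r2 : a + 2 + 1 = a + 3 := by ring
    rw [r2] at a2
    have h1 : Tm (y + 1) = Tm y := by
      have := Tm_le_one y; have := Tm_le_one (y + 1); omega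
    have h2 : Tm (y + 2) = Tm (y + 1) := by
      have := Tm_le_one (y + 1); have := Tm_le_one (y + 2); omega
    exact no_three y h1.symm h2.symm

/-- Combined H/G lemma by induction. For `s ≤ 2^q - 1` and `z = s + 2^q - 1`:
(H) not (Tm z ≠ Tm (z+1) and Tm s ≠ Tm z); (G) not (Tm z = Tm (z+1) and Tm s = Tm z). -/
lemma HG : ∀ q, 1 ≤ q → ∀ s, s ≤ 2 ^ q - 1 →
    (¬ (Tm (s + 2 ^ q - 1) ≠ Tm (s + 2 ^ q) ∧ Tm s ≠ Tm (s + 2 ^ q - 1))) ∧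
    (¬ (Tm (s + 2 ^ q - 1) = Tm (s + 2 ^ q) ∧ Tm s = Tm (s + 2 ^ q - 1))) := by
  intro q
  induction q with
  | zero => omega
  | succ q ih =>
    intro _ s hs
    rcases Nat.eq_zero_or_pos q with hq | hq
    · -- base case q+1 = 1
      subst hq
      have h2 : Tm 2 = 1 := by have := Tm_two_mul 1; simpa [Tm_one] using this
      have h3 : Tm 3 = 0 := by have := Tm_two_mul_add_one 1; simpa [Tm_one] using this
      interval_cases s
      · constructor
        · rintro ⟨hA, hB⟩
          rw [show (0 : ℕ) + 2 ^ 1 - 1 = 1 by norm_num, show (0 : ℕ) + 2 ^ 1 = 2 by norm_num]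
            at hA
          exact hA (by rw [Tm_one, h2])
        · rintro ⟨hA, hB⟩
          rw [show (0 : ℕ) + 2 ^ 1 - 1 = 1 by norm_num] at hB
          rw [Tm_zero, Tm_one] at hB
          exact absurd hB (by norm_num)
      · constructor
        · rintro ⟨hA, hB⟩
          rw [show (1 : ℕ) + 2 ^ 1 - 1 = 2 by norm_num] at hB
          rw [Tm_one, h2] at hB
          exact hB rfl
        · rintro ⟨hA, hB⟩
          rw [show (1 : ℕ) + 2 ^ 1 - 1 = 2 by norm_num, show (1 : ℕ) + 2 ^ 1 = 3 by norm_num]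
            at hA
          rw [h2, h3] at hA
          exact absurd hA (by norm_num)
    · -- inductive step, q ≥ 1
      have hpow : 2 ^ (q + 1) = 2 * 2 ^ q := by ring
      have hpq : (1 : ℕ) ≤ 2 ^ q := Nat.one_le_two_pow
      constructor
      · -- H(q+1)
        rintro ⟨hN, hT⟩
        rcases Nat.even_or_odd s with ⟨σ, hσ⟩ | ⟨σ, hσ⟩
        · -- s = 2σ : reduce to G(q)
          have hσ2 : σ ≤ 2 ^ q - 1 := by omega
          have hz : s + 2 ^ (q + 1) - 1 = 2 * (σ + 2 ^ q - 1) + 1 := by omega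
          have hz1 : s + 2 ^ (q + 1) = 2 * (σ + 2 ^ q - 1 + 1) := by omega
          have e1 : Tm (s + 2 ^ (q + 1) - 1) = 1 - Tm (σ + 2 ^ q - 1) := by
            rw [hz, Tm_two_mul_add_one]
          have e2 : Tm (s + 2 ^ (q + 1)) = Tm (σ + 2 ^ q - 1 + 1) := by rw [hz1, Tm_two_mul]
          rw [show σ + 2 ^ q - 1 + 1 = σ + 2 ^ q by omega] at e2
          have e3 : Tm s = Tm σ := by rw [hσ, show σ + σ = 2 * σ by ring, Tm_two_mul]
          have G := (ih hq σ hσ2).2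
          have l1 := Tm_le_one (σ + 2 ^ q - 1); have l2 := Tm_le_one (σ + 2 ^ q)
          have l3 := Tm_le_one σ
          exact G ⟨by omega, by omega⟩
        · -- s = 2σ+1 : contradiction with L1
          have hσ2 : σ < 2 ^ q := by omega
          have hz : s + 2 ^ (q + 1) - 1 = 2 * (σ + 2 ^ q) := by omega
          have e1 : Tm (s + 2 ^ (q + 1) - 1) = 1 - Tm σ := by
            rw [hz, Tm_two_mul, L1 q σ hσ2]
          have e2 : Tm s = 1 - Tm σ := by rw [hσ, Tm_two_mul_add_one]
          exact hT (by rw [e1, e2])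
      · -- G(q+1)
        rintro ⟨hN, hT⟩
        rcases Nat.even_or_odd s with ⟨σ, hσ⟩ | ⟨σ, hσ⟩
        · -- s = 2σ : reduce to H(q)
          have hσ2 : σ ≤ 2 ^ q - 1 := by omega
          have hz : s + 2 ^ (q + 1) - 1 = 2 * (σ + 2 ^ q - 1) + 1 := by omega
          have hz1 : s + 2 ^ (q + 1) = 2 * (σ + 2 ^ q - 1 + 1) := by omega
          have e1 : Tm (s + 2 ^ (q + 1) - 1) = 1 - Tm (σ + 2 ^ q - 1) := by
            rw [hz, Tm_two_mul_add_one]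
          have e2 : Tm (s + 2 ^ (q + 1)) = Tm (σ + 2 ^ q - 1 + 1) := by rw [hz1, Tm_two_mul]
          rw [show σ + 2 ^ q - 1 + 1 = σ + 2 ^ q by omega] at e2
          have e3 : Tm s = Tm σ := by rw [hσ, show σ + σ = 2 * σ by ring, Tm_two_mul]
          have H := (ih hq σ hσ2).1
          have l1 := Tm_le_one (σ + 2 ^ q - 1); have l2 := Tm_le_one (σ + 2 ^ q)
          have l3 := Tm_le_one σ
          exact H ⟨by omega, by omega⟩
        · -- s = 2σ+1 : z even, immediate contradiction
          have hz : s + 2 ^ (q + 1) - 1 = 2 * (σ + 2 ^ q) := by omega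
          have hz1 : s + 2 ^ (q + 1) = 2 * (σ + 2 ^ q) + 1 := by omega
          have e1 : Tm (s + 2 ^ (q + 1) - 1) = Tm (σ + 2 ^ q) := by rw [hz, Tm_two_mul]
          have e2 : Tm (s + 2 ^ (q + 1)) = 1 - Tm (σ + 2 ^ q) := by
            rw [hz1, Tm_two_mul_add_one]
          have := Tm_le_one (σ + 2 ^ q)
          rw [e1, e2] at hN
          omega

/-- WA: no 2-window at distance `2^b - 3` starting at any `a ≤ 2^b + 1`. -/
lemma WA (b a : ℕ) (hb : 4 ≤ b) (ha : a ≤ 2 ^ b + 1)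
    (h1 : Tm a = Tm (a + (2 ^ b - 3)))
    (h2 : Tm (a + 1) = Tm (a + 1 + (2 ^ b - 3))) : False := by
  have hP4 : 2 ^ b = 4 * 2 ^ (b - 2) := by
    have h := pow_add 2 (b - 2) 2
    rw [show b - 2 + 2 = b by omega] at h
    omega
  set P := 2 ^ (b - 2) with hPdef
  have hPge : 4 ≤ P := by
    have : 2 ^ 2 ≤ 2 ^ (b - 2) := Nat.pow_le_pow_right (by norm_num) (by omega)
    simpa using this
  rcases Nat.even_or_odd a with ⟨δ, hδ⟩ | ⟨γ, hγ⟩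
  · -- a = 2δ
    have hδ2 : δ ≤ 2 * P := by omega
    -- a + d = 2β + 1 with β = δ + 2P - 2
    have hz : a + (2 ^ b - 3) = 2 * (δ + 2 * P - 2) + 1 := by omega
    have hz1 : a + 1 + (2 ^ b - 3) = 2 * (δ + 2 * P - 2 + 1) := by omega
    have e0 : Tm a = Tm δ := by rw [hδ, show δ + δ = 2 * δ by ring, Tm_two_mul]
    have e1 : Tm (a + (2 ^ b - 3)) = 1 - Tm (δ + 2 * P - 2) := by
      rw [hz, Tm_two_mul_add_one]
    have e2 : Tm (a + 1) = 1 - Tm δ := by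
      rw [hδ, show δ + δ + 1 = 2 * δ + 1 by ring, Tm_two_mul_add_one]
    have e3 : Tm (a + 1 + (2 ^ b - 3)) = Tm (δ + 2 * P - 2 + 1) := by
      rw [hz1, Tm_two_mul]
    have lδ := Tm_le_one δ
    have lβ := Tm_le_one (δ + 2 * P - 2)
    have lβ1 := Tm_le_one (δ + 2 * P - 2 + 1)
    -- β must be odd, i.e. δ odd
    rcases Nat.even_or_odd δ with ⟨δ', hδ'⟩ | ⟨δ', hδ'⟩
    · -- δ even ⇒ β = δ + 2P - 2 even ⇒ Tm β = Tm (β + 1) impossible, but we must derive it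
      have hβeven : δ + 2 * P - 2 = 2 * (δ' + P - 1) := by omega
      have f1 : Tm (δ + 2 * P - 2) = Tm (δ' + P - 1) := by rw [hβeven, Tm_two_mul]
      have f2 : Tm (δ + 2 * P - 2 + 1) = 1 - Tm (δ' + P - 1) := by
        rw [hβeven, Tm_two_mul_add_one]
      have l := Tm_le_one (δ' + P - 1)
      -- from h1, h2: Tm β = Tm (β+1)
      omega
    · -- δ = 2δ' + 1
      have hβodd : δ + 2 * P - 2 = 2 * (δ' + P - 1) + 1 := by omega
      have hβodd1 : δ + 2 * P - 2 + 1 = 2 * (δ' + P - 1 + 1) := by omega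
      have f1 : Tm (δ + 2 * P - 2) = 1 - Tm (δ' + P - 1) := by
        rw [hβodd, Tm_two_mul_add_one]
      have f2 : Tm (δ + 2 * P - 2 + 1) = Tm (δ' + P - 1 + 1) := by rw [hβodd1, Tm_two_mul]
      have f3 : Tm δ = 1 - Tm δ' := by rw [hδ', Tm_two_mul_add_one]
      have lγ' := Tm_le_one (δ' + P - 1)
      have lγ'1 := Tm_le_one (δ' + P - 1 + 1)
      have lδ' := Tm_le_one δ'
      -- H(b-2) at s = δ', z = δ' + P - 1
      have hs : δ' ≤ 2 ^ (b - 2) - 1 := by omega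
      have H := (HG (b - 2) (by omega) δ' hs).1
      rw [← hPdef] at H
      rw [show δ' + P - 1 + 1 = δ' + P by omega] at f2
      exact H ⟨by omega, by omega⟩
  · -- a = 2γ + 1
    have hγ2 : γ ≤ P * 2 := by omega
    have hz : a + (2 ^ b - 3) = 2 * (γ + 2 * P - 1) := by omega
    have hz1 : a + 1 + (2 ^ b - 3) = 2 * (γ + 2 * P - 1) + 1 := by omega
    have e0 : Tm a = 1 - Tm γ := by rw [hγ, Tm_two_mul_add_one]
    have e1 : Tm (a + (2 ^ b - 3)) = Tm (γ + 2 * P - 1) := by rw [hz, Tm_two_mul]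
    have e2 : Tm (a + 1) = Tm (γ + 1) := by
      rw [hγ, show 2 * γ + 1 + 1 = 2 * (γ + 1) by ring, Tm_two_mul]
    have e3 : Tm (a + 1 + (2 ^ b - 3)) = 1 - Tm (γ + 2 * P - 1) := by
      rw [hz1, Tm_two_mul_add_one]
    have lγ := Tm_le_one γ
    have lγ1 := Tm_le_one (γ + 1)
    have lδ := Tm_le_one (γ + 2 * P - 1)
    -- from h1, h2 we get Tm γ = Tm (γ + 1), so γ odd
    rcases Nat.even_or_odd γ with ⟨γ', hγ'⟩ | ⟨γ', hγ'⟩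
    · have f1 : Tm γ = Tm γ' := by rw [hγ', show γ' + γ' = 2 * γ' by ring, Tm_two_mul]
      have f2 : Tm (γ + 1) = 1 - Tm γ' := by
        rw [hγ', show γ' + γ' + 1 = 2 * γ' + 1 by ring, Tm_two_mul_add_one]
      have l := Tm_le_one γ'
      omega
    · -- γ = 2γ' + 1, δ̂ = γ + 2P - 1 = 2(γ' + P)
      have hδeven : γ + 2 * P - 1 = 2 * (γ' + P) := by omega
      have f1 : Tm (γ + 2 * P - 1) = Tm (γ' + P) := by rw [hδeven, Tm_two_mul]
      have f2 : Tm γ = 1 - Tm γ' := by rw [hγ', Tm_two_mul_add_one]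
      have hγ'P : γ' < P := by omega
      have f3 : Tm (γ' + P) = 1 - Tm γ' := L1 (b - 2) γ' hγ'P
      have l := Tm_le_one γ'
      have l2 := Tm_le_one (γ' + P)
      omega

/-- WB: no 2-window at distance `3·2^b + 1` starting at any `a ≤ 2^(b+1) - 2`. -/
lemma WB (b a : ℕ) (hb : 2 ≤ b) (ha : a ≤ 2 ^ (b + 1) - 2)
    (h1 : Tm a = Tm (a + (3 * 2 ^ b + 1)))
    (h2 : Tm (a + 1) = Tm (a + 1 + (3 * 2 ^ b + 1))) : False := by
  have hP4 : 2 ^ b = 4 * 2 ^ (b - 2) := by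
    have h := pow_add 2 (b - 2) 2
    rw [show b - 2 + 2 = b by omega] at h
    omega
  have hP8 : 2 ^ (b + 1) = 8 * 2 ^ (b - 2) := by
    rw [pow_succ, hP4]; ring
  set Q := 2 ^ (b - 2) with hQdef
  have hQge : 1 ≤ Q := Nat.one_le_two_pow
  -- L2 at level b-2 : w < 2Q → Tm (w + 3Q) = Tm w
  have hL2 : ∀ w, w < 2 * Q → Tm (w + 3 * Q) = Tm w := by
    intro w hw
    have := L2 (b - 2) w (by
      rw [show 2 ^ (b - 2 + 1) = 2 * Q by rw [pow_succ]; ring]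
      exact hw)
    simpa using this
  rcases Nat.even_or_odd a with ⟨δ, hδ⟩ | ⟨γ, hγ⟩
  · -- a = 2δ, δ ≤ 4Q - 1 ; single equality h1 suffices
    have hδ2 : δ ≤ 4 * Q - 1 := by omega
    have hz : a + (3 * 2 ^ b + 1) = 2 * (δ + 6 * Q) + 1 := by omega
    have e0 : Tm a = Tm δ := by rw [hδ, show δ + δ = 2 * δ by ring, Tm_two_mul]
    have e1 : Tm (a + (3 * 2 ^ b + 1)) = 1 - Tm (δ + 6 * Q) := by
      rw [hz, Tm_two_mul_add_one]
    rcases Nat.even_or_odd δ with ⟨δ', hδ'⟩ | ⟨δ', hδ'⟩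
    · have hz2 : δ + 6 * Q = 2 * (δ' + 3 * Q) := by omega
      have f1 : Tm (δ + 6 * Q) = Tm (δ' + 3 * Q) := by rw [hz2, Tm_two_mul]
      have f2 : Tm (δ' + 3 * Q) = Tm δ' := hL2 δ' (by omega)
      have f3 : Tm δ = Tm δ' := by rw [hδ', show δ' + δ' = 2 * δ' by ring, Tm_two_mul]
      have l := Tm_le_one δ'
      omega
    · have hz2 : δ + 6 * Q = 2 * (δ' + 3 * Q) + 1 := by omega
      have f1 : Tm (δ + 6 * Q) = 1 - Tm (δ' + 3 * Q) := by rw [hz2, Tm_two_mul_add_one]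
      have f2 : Tm (δ' + 3 * Q) = Tm δ' := hL2 δ' (by omega)
      have f3 : Tm δ = 1 - Tm δ' := by rw [hδ', Tm_two_mul_add_one]
      have l := Tm_le_one δ'
      have l2 := Tm_le_one (δ' + 3 * Q)
      omega
  · -- a = 2γ + 1, γ ≤ 4Q - 2
    have hγ2 : γ ≤ 4 * Q - 2 := by omega
    have hz : a + (3 * 2 ^ b + 1) = 2 * (γ + 6 * Q + 1) := by omega
    have hz1 : a + 1 + (3 * 2 ^ b + 1) = 2 * (γ + 6 * Q + 1) + 1 := by omega
    have e0 : Tm a = 1 - Tm γ := by rw [hγ, Tm_two_mul_add_one]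
    have e1 : Tm (a + (3 * 2 ^ b + 1)) = Tm (γ + 6 * Q + 1) := by rw [hz, Tm_two_mul]
    have e2 : Tm (a + 1) = Tm (γ + 1) := by
      rw [hγ, show 2 * γ + 1 + 1 = 2 * (γ + 1) by ring, Tm_two_mul]
    have e3 : Tm (a + 1 + (3 * 2 ^ b + 1)) = 1 - Tm (γ + 6 * Q + 1) := by
      rw [hz1, Tm_two_mul_add_one]
    have lγ := Tm_le_one γ
    have lγ1 := Tm_le_one (γ + 1)
    have lδ := Tm_le_one (γ + 6 * Q + 1)
    rcases Nat.even_or_odd γ with ⟨γ', hγ'⟩ | ⟨γ', hγ'⟩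
    · -- γ even ⇒ Tm γ = Tm (γ+1) impossible
      have f1 : Tm γ = Tm γ' := by rw [hγ', show γ' + γ' = 2 * γ' by ring, Tm_two_mul]
      have f2 : Tm (γ + 1) = 1 - Tm γ' := by
        rw [hγ', show γ' + γ' + 1 = 2 * γ' + 1 by ring, Tm_two_mul_add_one]
      have l := Tm_le_one γ'
      omega
    · -- γ = 2γ' + 1 with γ' ≤ 2Q - 2
      have hγ'2 : γ' ≤ 2 * Q - 2 := by omega
      have hz2 : γ + 6 * Q + 1 = 2 * (γ' + 1 + 3 * Q) := by omega
      have f1 : Tm (γ + 6 * Q + 1) = Tm (γ' + 1 + 3 * Q) := by rw [hz2, Tm_two_mul]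
      have f2 : Tm (γ' + 1 + 3 * Q) = Tm (γ' + 1) := hL2 (γ' + 1) (by omega)
      have f3 : Tm γ = 1 - Tm γ' := by rw [hγ', Tm_two_mul_add_one]
      have f4 : Tm (γ + 1) = Tm (γ' + 1) := by
        rw [hγ', show 2 * γ' + 1 + 1 = 2 * (γ' + 1) by ring, Tm_two_mul]
      have l := Tm_le_one γ'
      have l2 := Tm_le_one (γ' + 1)
      omega

lemma div_add_div_le (a c n : ℕ) : a / n + c / n ≤ (a + c) / n := by
  rcases Nat.eq_zero_or_pos n with h | h
  · simp [h]
  · rw [Nat.le_div_iff_mul_le h, Nat.add_mul]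
    exact Nat.add_le_add (Nat.div_mul_le_self a n) (Nat.div_mul_le_self c n)

/-- Iterated desubstitution: from agreement at distance `D` on `[x, x+m)`,
get agreement at distance `D / 2^t` on the divided window. -/
lemma iter (x m D : ℕ) (hm : 0 < m) (h : ∀ i < m, Tm (x + i) = Tm (x + D + i)) :
    ∀ t, 2 ^ t ∣ D → ∀ n, x / 2 ^ t ≤ n → n ≤ (x + m - 1) / 2 ^ t →
      Tm n = Tm (n + D / 2 ^ t) := by
  intro t
  induction t with
  | zero =>
    intro _ n hlo hhi
    have hlo' : x ≤ n := by simpa using hlo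
    have hhi' : n ≤ x + m - 1 := by simpa using hhi
    have hi : n - x < m := by omega
    have key := h (n - x) hi
    rw [show x + (n - x) = n by omega, show x + D + (n - x) = n + D by omega] at key
    simpa using key
  | succ t ih =>
    intro hdvd n hlo hhi
    have hdvd' : 2 ^ t ∣ D := dvd_trans (pow_dvd_pow 2 (Nat.le_succ t)) hdvd
    obtain ⟨c, hc⟩ := hdvd
    have hpos : 0 < 2 ^ t := Nat.pow_pos (by norm_num)
    have hpos1 : 0 < 2 ^ (t + 1) := Nat.pow_pos (by norm_num)
    have hD2 : D / 2 ^ (t + 1) = c := by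
      rw [hc, Nat.mul_div_cancel_left _ hpos1]
    have hDt : D / 2 ^ t = 2 * c := by
      rw [hc, pow_succ, show 2 ^ t * 2 * c = 2 ^ t * (2 * c) by ring,
        Nat.mul_div_cancel_left _ hpos]
    have e1 : x / 2 ^ (t + 1) = x / 2 ^ t / 2 := by
      rw [Nat.div_div_eq_div_mul, ← pow_succ]
    have e2 : (x + m - 1) / 2 ^ (t + 1) = (x + m - 1) / 2 ^ t / 2 := by
      rw [Nat.div_div_eq_div_mul, ← pow_succ]
    rw [e1] at hlo
    rw [e2] at hhi
    have hlohi : x / 2 ^ t ≤ (x + m - 1) / 2 ^ t := Nat.div_le_div_right (by omega)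
    rw [hD2]
    by_cases hc2 : x / 2 ^ t ≤ 2 * n
    · have key := ih hdvd' (2 * n) hc2 (by omega)
      rw [hDt, show 2 * n + 2 * c = 2 * (n + c) by ring, Tm_two_mul, Tm_two_mul] at key
      exact key
    · have key := ih hdvd' (2 * n + 1) (by omega) (by omega)
      rw [hDt, show 2 * n + 1 + 2 * c = 2 * (n + c) + 1 by ring,
        Tm_two_mul_add_one, Tm_two_mul_add_one] at key
      have := Tm_le_one n
      have := Tm_le_one (n + c)
      omega

lemma tm_succ_eq (n : ℕ) : tm (n + 1) = Tm n := by simp [tm, Tm]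

/-- Pointwise consequence of block equality, after desubstitution: a window
of agreements at distance `f * m` at level `v`, where `s - r = 2^v * f`. -/
lemma pair_window {j m r s : ℕ} (hm : 0 < m) (hrs : r < s)
    (heq : tmBlock j m r = tmBlock j m s) :
    ∃ v f, s - r = 2 ^ v * f ∧ f % 2 = 1 ∧
      ∀ n, (j + r * m) / 2 ^ v ≤ n → n ≤ (j + r * m + m - 1) / 2 ^ v →
        Tm n = Tm (n + f * m) := by
  have hpt : ∀ i < m, Tm (j + r * m + i) = Tm (j + r * m + (s - r) * m + i) := by
    intro i hi
    have h1 : (tmBlock j m r)[i]? = (tmBlock j m s)[i]? := by rw [heq]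
    simp only [tmBlock, List.getElem?_map, List.getElem?_range, hi, if_pos] at h1
    have h2 : tm (j + r * m + i + 1) = tm (j + s * m + i + 1) := by
      have hlt : i < m := hi
      simpa [List.getElem?_range, hlt] using h1
    rw [tm_succ_eq, tm_succ_eq] at h2
    have hsm : j + r * m + (s - r) * m + i = j + s * m + i := by
      have : r * m + (s - r) * m = s * m := by
        rw [← Nat.add_mul]
        congr 1
        omega
      omega
    rw [hsm]
    exact h2
  have hne : s - r ≠ 0 := by omega
  obtain ⟨v, f, hfodd, hvf⟩ := Nat.exists_eq_pow_mul_and_not_dvd hne 2 (by norm_num)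
  refine ⟨v, f, hvf, Nat.two_dvd_ne_zero.mp hfodd, ?_⟩
  intro n hlo hhi
  have hdvd : 2 ^ v ∣ (s - r) * m := by
    rw [hvf]
    exact Dvd.dvd.mul_right (Dvd.dvd.mul_right dvd_rfl f) m
  have key := iter (j + r * m) m ((s - r) * m) hm hpt v hdvd n hlo hhi
  have hdiv : (s - r) * m / 2 ^ v = f * m := by
    rw [hvf, Nat.mul_assoc, Nat.mul_div_cancel_left _ (Nat.pow_pos (by norm_num))]
  rw [hdiv] at key
  exact key

lemma pow_split (a b : ℕ) (h : a ≤ b) : 2 ^ b = 2 ^ (b - a) * 2 ^ a := by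
  rw [← pow_add]
  congr 1
  omega

/-- Family A: the `j`-fix is a `2^b`-anti-power with block size `2^b - 3`. -/
lemma FA (j b : ℕ) (hb : 4 ≤ b) (hj : j ≤ 2 ^ b) :
    IsAntipowerJfix j (2 ^ b) (2 ^ b - 3) := by
  have h16 : (16 : ℕ) ≤ 2 ^ b := by
    calc (16 : ℕ) = 2 ^ 4 := by norm_num
    _ ≤ 2 ^ b := Nat.pow_le_pow_right (by norm_num) hb
  have key : ∀ r s, r < s → s < 2 ^ b →
      tmBlock j (2 ^ b - 3) r = tmBlock j (2 ^ b - 3) s → False := by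
    intro r s hrs hs heq
    have hm : 0 < 2 ^ b - 3 := by omega
    obtain ⟨v, f, hvf, hfodd, hwin⟩ := pair_window hm hrs heq
    have hfpos : 1 ≤ f := by omega
    have hwl : (j + r * (2 ^ b - 3)) / 2 ^ v + (2 ^ b - 3 - 1) / 2 ^ v ≤
        (j + r * (2 ^ b - 3) + (2 ^ b - 3) - 1) / 2 ^ v := by
      have h := div_add_div_le (j + r * (2 ^ b - 3)) (2 ^ b - 3 - 1) (2 ^ v)
      rw [show j + r * (2 ^ b - 3) + (2 ^ b - 3 - 1) =
        j + r * (2 ^ b - 3) + (2 ^ b - 3) - 1 by omega] at h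
      exact h
    have hmodd : (f * (2 ^ b - 3)) % 2 = 1 := by
      have h2 : (2 ^ b) % 2 = 0 := by
        rw [pow_split 1 b (by omega)]
        simp [Nat.mul_mod]
      rw [Nat.mul_mod, hfodd]
      omega
    rcases lt_trichotomy v (b - 1) with hv | hv | hv
    · -- v ≤ b - 2 : find a 4-window, contradiction with no4win
      have hle : 2 ^ v ≤ 2 ^ (b - 2) := Nat.pow_le_pow_right (by norm_num) (by omega)
      have h4 : 2 ^ b = 2 ^ (b - 2) * 2 ^ 2 := pow_split 2 b (by omega)
      have h3 : 3 ≤ (2 ^ b - 3 - 1) / 2 ^ v := by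
        rw [Nat.le_div_iff_mul_le (Nat.pow_pos (by norm_num))]
        omega
      apply no4win ((j + r * (2 ^ b - 3)) / 2 ^ v) (f * (2 ^ b - 3)) hmodd
      intro i hi
      exact hwin ((j + r * (2 ^ b - 3)) / 2 ^ v + i) (by omega) (by omega)
    · -- v = b - 1 : f = 1 and use WA
      subst hv
      have h2v : 2 ^ (b - 1) * 2 = 2 ^ b := by
        rw [pow_split 1 b (by omega)]
        norm_num
      have hf1 : f = 1 := by
        by_contra hf
        have hf3 : 3 ≤ f := by omega
        have : 2 ^ (b - 1) * 3 ≤ 2 ^ (b - 1) * f := Nat.mul_le_mul_left _ hf3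
        omega
      subst hf1
      have hr : r + 2 ^ (b - 1) ≤ 2 ^ b - 1 := by omega
      set X := 2 ^ (b - 1) with hXdef
      have hXge : 8 ≤ X := by
        have : (2:ℕ) ^ 3 ≤ 2 ^ (b - 1) := Nat.pow_le_pow_right (by norm_num) (by omega)
        simpa using this
      have hlo : (j + r * (2 ^ b - 3)) / X ≤ 2 ^ b + 1 := by
        have hlt : j + r * (2 ^ b - 3) < X * (2 ^ b + 2) := by
          have hrm : r * (2 ^ b - 3) ≤ (X - 1) * (2 * X) :=
            Nat.mul_le_mul (by omega) (by omega)
          have e1 : (X - 1) * (2 * X) + 2 * X = X * (2 * X) := by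
            rw [Nat.sub_mul, one_mul]
            have : 2 * X ≤ X * (2 * X) := by
              calc 2 * X = 1 * (2 * X) := by ring
              _ ≤ X * (2 * X) := Nat.mul_le_mul_right _ (by omega)
            omega
          have e2 : X * (2 ^ b + 2) = X * (2 * X) + 2 * X := by
            rw [show (2 : ℕ) ^ b = 2 * X by omega]
            ring
          omega
        have hd : (j + r * (2 ^ b - 3)) / X < 2 ^ b + 2 := by
          rw [Nat.div_lt_iff_lt_mul (show 0 < X by omega)]
          calc j + r * (2 ^ b - 3) < X * (2 ^ b + 2) := hlt
          _ = (2 ^ b + 2) * X := by ring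
        omega
      have h1w : 1 ≤ (2 ^ b - 3 - 1) / X := by
        rw [Nat.le_div_iff_mul_le (show 0 < X by omega)]
        omega
      have hw1 := hwin ((j + r * (2 ^ b - 3)) / X) le_rfl (by omega)
      have hw2 := hwin ((j + r * (2 ^ b - 3)) / X + 1) (by omega) (by omega)
      rw [one_mul] at hw1 hw2
      exact WA b ((j + r * (2 ^ b - 3)) / X) hb hlo hw1 hw2
    · -- v ≥ b : s - r too large
      have hbv : 2 ^ b ≤ 2 ^ v := Nat.pow_le_pow_right (by norm_num) (by omega)
      have h1 : 2 ^ v ≤ 2 ^ v * f := Nat.le_mul_of_pos_right _ (by omega)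
      omega
  intro r₁ hr₁ r₂ hr₂ heq
  rcases lt_trichotomy r₁ r₂ with h | h | h
  · exact (key r₁ r₂ h hr₂ heq).elim
  · exact h
  · exact (key r₂ r₁ h hr₁ heq.symm).elim

/-- Family B: the `j`-fix is a `K_b`-anti-power with block size `m = 3·2^b + 1`,
where `K_b = (4^(b+1) - 2^(b+1) - j) / m + 2^(b+1) ≈ (10/9)·m`. -/
lemma FB (j b : ℕ) (hb : 2 ≤ b) (hj : j ≤ 2 ^ b) :
    IsAntipowerJfix j ((4 ^ (b + 1) - 2 ^ (b + 1) - j) / (3 * 2 ^ b + 1) + 2 ^ (b + 1))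
      (3 * 2 ^ b + 1) := by
  have hZ4 : (4 : ℕ) ≤ 2 ^ b := by
    calc (4 : ℕ) = 2 ^ 2 := by norm_num
    _ ≤ 2 ^ b := Nat.pow_le_pow_right (by norm_num) hb
  have hY : 2 ^ (b + 1) = 2 * 2 ^ b := by rw [pow_succ]; ring
  have h4pow : (4 : ℕ) ^ (b + 1) = 4 * (2 ^ b * 2 ^ b) := by
    have h1 : (4 : ℕ) ^ (b + 1) = 2 ^ (b + 1) * 2 ^ (b + 1) := by
      rw [show (4 : ℕ) = 2 * 2 by norm_num, Nat.mul_pow]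
    rw [h1, hY]
    ring
  have hWlarge : 16 * 2 ^ b ≤ 4 * (2 ^ b * 2 ^ b) := by
    have : 4 * 2 ^ b ≤ 2 ^ b * 2 ^ b := Nat.mul_le_mul_right _ hZ4
    omega
  have hA : 4 ^ (b + 1) - 2 ^ (b + 1) - j + 2 ^ (b + 1) + j = 4 ^ (b + 1) := by
    omega
  -- abbreviate: A := 4^(b+1) - 2^(b+1) - j ; m := 3 * 2^b + 1 ; K := A / m + 2^(b+1)
  have hKle : (4 ^ (b + 1) - 2 ^ (b + 1) - j) / (3 * 2 ^ b + 1) + 2 ^ (b + 1) ≤ 4 * 2 ^ b := by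
    have hdle : (4 ^ (b + 1) - 2 ^ (b + 1) - j) / (3 * 2 ^ b + 1) < 2 * 2 ^ b + 1 := by
      rw [Nat.div_lt_iff_lt_mul (by omega : 0 < 3 * 2 ^ b + 1)]
      have he : (2 * 2 ^ b + 1) * (3 * 2 ^ b + 1) = 6 * (2 ^ b * 2 ^ b) + 5 * 2 ^ b + 1 := by
        ring
      omega
    omega
  have key : ∀ r s, r < s →
      s < (4 ^ (b + 1) - 2 ^ (b + 1) - j) / (3 * 2 ^ b + 1) + 2 ^ (b + 1) →
      tmBlock j (3 * 2 ^ b + 1) r = tmBlock j (3 * 2 ^ b + 1) s → False := by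
    intro r s hrs hs heq
    have hm : 0 < 3 * 2 ^ b + 1 := by omega
    obtain ⟨v, f, hvf, hfodd, hwin⟩ := pair_window hm hrs heq
    have hfpos : 1 ≤ f := by omega
    have hwl : (j + r * (3 * 2 ^ b + 1)) / 2 ^ v + (3 * 2 ^ b + 1 - 1) / 2 ^ v ≤
        (j + r * (3 * 2 ^ b + 1) + (3 * 2 ^ b + 1) - 1) / 2 ^ v := by
      have h := div_add_div_le (j + r * (3 * 2 ^ b + 1)) (3 * 2 ^ b + 1 - 1) (2 ^ v)
      rw [show j + r * (3 * 2 ^ b + 1) + (3 * 2 ^ b + 1 - 1) =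
        j + r * (3 * 2 ^ b + 1) + (3 * 2 ^ b + 1) - 1 by omega] at h
      exact h
    have hmodd : (f * (3 * 2 ^ b + 1)) % 2 = 1 := by
      have h2 : (2 ^ b) % 2 = 0 := by
        rw [pow_split 1 b (by omega)]
        simp [Nat.mul_mod]
      rw [Nat.mul_mod, hfodd]
      omega
    rcases lt_trichotomy v (b + 1) with hv | hv | hv
    · -- v ≤ b : 4-window
      have hle : 2 ^ v ≤ 2 ^ b := Nat.pow_le_pow_right (by norm_num) (by omega)
      have h3 : 3 ≤ (3 * 2 ^ b + 1 - 1) / 2 ^ v := by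
        rw [Nat.le_div_iff_mul_le (Nat.pow_pos (by norm_num))]
        omega
      apply no4win ((j + r * (3 * 2 ^ b + 1)) / 2 ^ v) (f * (3 * 2 ^ b + 1)) hmodd
      intro i hi
      exact hwin ((j + r * (3 * 2 ^ b + 1)) / 2 ^ v + i) (by omega) (by omega)
    · -- v = b + 1 : f = 1 and use WB
      subst hv
      have h2v : 2 ^ (b + 1) = 2 * 2 ^ b := hY
      have hf1 : f = 1 := by
        by_contra hf
        have hf3 : 3 ≤ f := by omega
        have : 2 ^ (b + 1) * 3 ≤ 2 ^ (b + 1) * f := Nat.mul_le_mul_left _ hf3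
        omega
      subst hf1
      -- r + 1 ≤ A / m
      have hrA : r + 1 ≤ (4 ^ (b + 1) - 2 ^ (b + 1) - j) / (3 * 2 ^ b + 1) := by omega
      have hrm : (r + 1) * (3 * 2 ^ b + 1) ≤ 4 ^ (b + 1) - 2 ^ (b + 1) - j := by
        calc (r + 1) * (3 * 2 ^ b + 1)
            ≤ ((4 ^ (b + 1) - 2 ^ (b + 1) - j) / (3 * 2 ^ b + 1)) * (3 * 2 ^ b + 1) :=
              Nat.mul_le_mul_right _ hrA
        _ ≤ 4 ^ (b + 1) - 2 ^ (b + 1) - j := Nat.div_mul_le_self _ _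
      have hrm' : r * (3 * 2 ^ b + 1) + (3 * 2 ^ b + 1) = (r + 1) * (3 * 2 ^ b + 1) := by
        ring
      have hlo : (j + r * (3 * 2 ^ b + 1)) / 2 ^ (b + 1) ≤ 2 ^ (b + 1) - 2 := by
        have hlt : j + r * (3 * 2 ^ b + 1) < (2 ^ (b + 1) - 2 + 1) * 2 ^ (b + 1) := by
          have he : (2 * 2 ^ b - 1) * (2 * 2 ^ b) + 2 * 2 ^ b = 4 * (2 ^ b * 2 ^ b) := by
            rw [Nat.sub_mul, one_mul]
            have h22 : 2 * 2 ^ b * (2 * 2 ^ b) = 4 * (2 ^ b * 2 ^ b) := by ring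
            have h2b : 2 * 2 ^ b ≤ 2 * 2 ^ b * (2 * 2 ^ b) :=
              Nat.le_mul_of_pos_right _ (by omega)
            omega
          have hgoal : (2 ^ (b + 1) - 2 + 1) * 2 ^ (b + 1) = (2 * 2 ^ b - 1) * (2 * 2 ^ b) := by
            rw [hY, show 2 * 2 ^ b - 2 + 1 = 2 * 2 ^ b - 1 by omega]
          omega
        have := (Nat.div_lt_iff_lt_mul (show 0 < 2 ^ (b + 1) by positivity)).mpr hlt
        omega
      have h1w : 1 ≤ (3 * 2 ^ b + 1 - 1) / 2 ^ (b + 1) := by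
        rw [Nat.le_div_iff_mul_le (show 0 < 2 ^ (b + 1) by positivity)]
        omega
      have hw1 := hwin ((j + r * (3 * 2 ^ b + 1)) / 2 ^ (b + 1)) le_rfl (by omega)
      have hw2 := hwin ((j + r * (3 * 2 ^ b + 1)) / 2 ^ (b + 1) + 1) (by omega) (by omega)
      rw [one_mul] at hw1 hw2
      exact WB b ((j + r * (3 * 2 ^ b + 1)) / 2 ^ (b + 1)) hb hlo hw1 hw2
    · -- v ≥ b + 2
      have hbv : 2 ^ (b + 2) ≤ 2 ^ v := Nat.pow_le_pow_right (by norm_num) (by omega)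
      have h1 : 2 ^ v ≤ 2 ^ v * f := Nat.le_mul_of_pos_right _ (by omega)
      have h42 : 2 ^ (b + 2) = 4 * 2 ^ b := by rw [pow_succ, pow_succ]; ring
      omega
  intro r₁ hr₁ r₂ hr₂ heq
  rcases lt_trichotomy r₁ r₂ with h | h | h
  · exact (key r₁ r₂ h hr₂ heq).elim
  · exact h
  · exact (key r₂ r₁ h hr₁ heq.symm).elim

lemma isap_mono {j k k' m : ℕ} (h : k' ≤ k) (hap : IsAntipowerJfix j k m) :
    IsAntipowerJfix j k' m :=
  fun r₁ h1 r₂ h2 he => hap r₁ (lt_of_lt_of_le h1 h) r₂ (lt_of_lt_of_le h2 h) he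

lemma gamma_le {j k m : ℕ} (hm : 0 < m) (h : IsAntipowerJfix j k m) : gammaJ j k ≤ m :=
  Nat.sInf_le ⟨hm, h⟩

/-- Eventual bound `2·γ_j(k) ≤ 3k`. -/
lemma ev32 (j : ℕ) : ∀ k, 2 ^ (j + 13) + 1 ≤ k → 2 * gammaJ j k ≤ 3 * k := by
  intro k hk
  have hjj : j < 2 ^ j := Nat.lt_two_pow_self (n := j)
  have hj13 : 2 ^ (j + 13) = 8192 * 2 ^ j := by rw [pow_add]; ring
  have hk1 : 1 ≤ k - 1 := by omega
  set β := Nat.log 2 (k - 1) with hβdef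
  have hlow : 2 ^ β ≤ k - 1 := Nat.pow_log_le_self 2 (by omega)
  have hhigh : k - 1 < 2 ^ (β + 1) := Nat.lt_pow_succ_log_self (by norm_num) _
  have hβj : j + 13 ≤ β := by
    by_contra hc
    push_neg at hc
    have : 2 ^ (β + 1) ≤ 2 ^ (j + 13) := Nat.pow_le_pow_right (by norm_num) (by omega)
    omega
  have hβ1 : β - 1 + 1 = β := by omega
  have hZsplit : 2 ^ β = 2 * 2 ^ (β - 1) := by
    have := pow_split 1 β (by omega)
    simpa [Nat.mul_comm] using this
  have hZ12 : 2 ^ (j + 12) ≤ 2 ^ (β - 1) := Nat.pow_le_pow_right (by norm_num) (by omega)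
  have hj12 : 2 ^ (j + 12) = 4096 * 2 ^ j := by rw [pow_add]; ring
  have hj1 : j + 100 ≤ 2 ^ (β - 1) := by omega
  -- K of family B at b = β - 1
  have hFB := FB j (β - 1) (by omega) (by omega)
  rw [hβ1] at hFB
  by_cases hcase : k ≤ (4 ^ β - 2 ^ β - j) / (3 * 2 ^ (β - 1) + 1) + 2 ^ β
  · have hgam : gammaJ j k ≤ 3 * 2 ^ (β - 1) + 1 :=
      gamma_le (by omega) (isap_mono hcase hFB)
    omega
  · push_neg at hcase
    have hk2 : k ≤ 2 ^ (β + 1) := by omega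
    have hFA := FA j (β + 1) (by omega) (by
      have : 2 ^ j ≤ 2 ^ (β + 1) := Nat.pow_le_pow_right (by norm_num) (by omega)
      omega)
    have hgam : gammaJ j k ≤ 2 ^ (β + 1) - 3 :=
      gamma_le (by
        have : 2 ^ (j + 13) ≤ 2 ^ (β + 1) := Nat.pow_le_pow_right (by norm_num) (by omega)
        omega) (isap_mono hk2 hFA)
    -- lower bound for K of family B
    have hm'pos : 0 < 3 * 2 ^ (β - 1) + 1 := by omega
    have hD : 2 ^ (β - 1) - 2 ≤ (4 ^ β - 2 ^ β - j) / (3 * 2 ^ (β - 1) + 1) := by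
      rw [Nat.le_div_iff_mul_le hm'pos]
      have hsub := Nat.sub_mul (2 ^ (β - 1)) 2 (3 * 2 ^ (β - 1) + 1)
      have hexp : 2 ^ (β - 1) * (3 * 2 ^ (β - 1) + 1) =
          3 * (2 ^ (β - 1) * 2 ^ (β - 1)) + 2 ^ (β - 1) := by ring
      have h4β : 4 ^ β = 4 * (2 ^ (β - 1) * 2 ^ (β - 1)) := by
        have h1 : (4 : ℕ) ^ β = 2 ^ β * 2 ^ β := by
          rw [show (4 : ℕ) = 2 * 2 by norm_num, Nat.mul_pow]
        rw [h1, hZsplit]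
        ring
      have hZZ : 2 ^ (β - 1) ≤ 2 ^ (β - 1) * 2 ^ (β - 1) :=
        Nat.le_mul_of_pos_left _ (by positivity)
      have hjZZ : j ≤ 2 ^ (β - 1) * 2 ^ (β - 1) := by omega
      have h2β : 2 ^ β ≤ 2 ^ (β - 1) * 2 ^ (β - 1) := by
        have : 2 * 2 ^ (β - 1) ≤ 2 ^ (β - 1) * 2 ^ (β - 1) :=
          Nat.mul_le_mul_right _ (by omega)
        omega
      omega
    have hβ2 : 2 ^ (β + 1) = 4 * 2 ^ (β - 1) := by
      rw [pow_succ, hZsplit]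
      ring
    omega

/-- Eventually `γ_j(k)/k ≤ 3/2` (as reals). -/
lemma ev_ratio (j : ℕ) : ∀ᶠ k in Filter.atTop, (gammaJ j k : ℝ) / k ≤ 3 / 2 := by
  rw [Filter.eventually_atTop]
  refine ⟨2 ^ (j + 13) + 1, fun k hk => ?_⟩
  have h := ev32 j k hk
  have hk0 : 0 < k := by
    have : (0:ℕ) < 2 ^ (j + 13) := by positivity
    omega
  rw [div_le_iff₀ (by exact_mod_cast hk0)]
  have hcast : (2 * gammaJ j k : ℝ) ≤ (3 * k : ℝ) := by exact_mod_cast h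
  push_cast at hcast ⊢
  linarith

/-- Ratio bound along the family-B subsequence. -/
lemma RB (j b : ℕ) (hjb : j + 100 ≤ 2 ^ b) :
    (gammaJ j ((4 ^ (b + 1) - 2 ^ (b + 1) - j) / (3 * 2 ^ b + 1) + 2 ^ (b + 1)) : ℝ) /
      (((4 ^ (b + 1) - 2 ^ (b + 1) - j) / (3 * 2 ^ b + 1) + 2 ^ (b + 1) : ℕ) : ℝ) ≤
      9 / 10 + (j + 2) / 2 ^ b := by
  have hb : 2 ≤ b := by
    by_contra hc
    push_neg at hc
    interval_cases b <;> simp_all <;> omega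
  have hj : j ≤ 2 ^ b := by omega
  have hY : 2 ^ (b + 1) = 2 * 2 ^ b := by rw [pow_succ]; ring
  have h4pow : (4 : ℕ) ^ (b + 1) = 4 * (2 ^ b * 2 ^ b) := by
    have h1 : (4 : ℕ) ^ (b + 1) = 2 ^ (b + 1) * 2 ^ (b + 1) := by
      rw [show (4 : ℕ) = 2 * 2 by norm_num, Nat.mul_pow]
    rw [h1, hY]
    ring
  have hWW : 2 ^ b * 16 ≤ 2 ^ b * 2 ^ b := Nat.mul_le_mul_left _ (by omega)
  have hA : 4 ^ (b + 1) - 2 ^ (b + 1) - j + 2 ^ (b + 1) + j = 4 ^ (b + 1) := by omega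
  have hgam : gammaJ j ((4 ^ (b + 1) - 2 ^ (b + 1) - j) / (3 * 2 ^ b + 1) + 2 ^ (b + 1)) ≤
      3 * 2 ^ b + 1 :=
    gamma_le (by omega) (FB j b hb hj)
  -- key counting bound:  10·W² ≤ m·K + 3W + j
  have hdm := Nat.div_add_mod (4 ^ (b + 1) - 2 ^ (b + 1) - j) (3 * 2 ^ b + 1)
  have hmod : (4 ^ (b + 1) - 2 ^ (b + 1) - j) % (3 * 2 ^ b + 1) < 3 * 2 ^ b + 1 :=
    Nat.mod_lt _ (by omega)
  have hexp : (3 * 2 ^ b + 1) *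
      ((4 ^ (b + 1) - 2 ^ (b + 1) - j) / (3 * 2 ^ b + 1) + 2 ^ (b + 1)) =
      (4 ^ (b + 1) - 2 ^ (b + 1) - j) / (3 * 2 ^ b + 1) * (3 * 2 ^ b + 1) +
      (3 * 2 ^ b + 1) * 2 ^ (b + 1) := by ring
  have hm2 : (3 * 2 ^ b + 1) * 2 ^ (b + 1) = 6 * (2 ^ b * 2 ^ b) + 2 * 2 ^ b := by
    rw [hY]; ring
  have hcomm : (3 * 2 ^ b + 1) * ((4 ^ (b + 1) - 2 ^ (b + 1) - j) / (3 * 2 ^ b + 1)) =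
      (4 ^ (b + 1) - 2 ^ (b + 1) - j) / (3 * 2 ^ b + 1) * (3 * 2 ^ b + 1) :=
    Nat.mul_comm _ _
  have hKm : 10 * (2 ^ b * 2 ^ b) ≤ (3 * 2 ^ b + 1) *
      ((4 ^ (b + 1) - 2 ^ (b + 1) - j) / (3 * 2 ^ b + 1) + 2 ^ (b + 1)) + 3 * 2 ^ b + j := by
    omega
  have hKge : 2 * 2 ^ b ≤ (4 ^ (b + 1) - 2 ^ (b + 1) - j) / (3 * 2 ^ b + 1) + 2 ^ (b + 1) := by
    calc 2 * 2 ^ b = 2 ^ (b + 1) := hY.symm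
    _ ≤ _ := Nat.le_add_left _ _
  -- move to ℝ
  set K := (4 ^ (b + 1) - 2 ^ (b + 1) - j) / (3 * 2 ^ b + 1) + 2 ^ (b + 1) with hKdef
  have hWpos : (0 : ℝ) < 2 ^ b := by positivity
  have hKpos : (0 : ℝ) < (K : ℝ) := by
    have h0 : (0 : ℕ) < K := by
      have h1 : (0 : ℕ) < 2 ^ b := by positivity
      omega
    exact_mod_cast h0
  have step1 : (gammaJ j K : ℝ) / (K : ℝ) ≤ ((3 * 2 ^ b + 1 : ℕ) : ℝ) / (K : ℝ) := by
    have hgam' : (gammaJ j K : ℝ) ≤ ((3 * 2 ^ b + 1 : ℕ) : ℝ) := by exact_mod_cast hgam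
    gcongr
  refine le_trans step1 ?_
  have hrhs : (9 : ℝ) / 10 + ((j : ℝ) + 2) / 2 ^ b =
      (9 * 2 ^ b + 10 * ((j : ℝ) + 2)) / (10 * 2 ^ b) := by
    field_simp
  have hcast1 : ((3 * 2 ^ b + 1 : ℕ) : ℝ) = 3 * 2 ^ b + 1 := by push_cast; ring
  rw [hcast1, hrhs, div_le_div_iff₀ hKpos (by positivity)]
  -- goal : (3·W + 1) * (10·W) ≤ (9·W + 10(j+2)) * K
  have hc1 : 10 * ((2 : ℝ) ^ b * 2 ^ b) ≤ (3 * 2 ^ b + 1) * (K : ℝ) + 3 * 2 ^ b + j := by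
    have := hKm
    have hcast : (10 * (2 ^ b * 2 ^ b) : ℕ) ≤ ((3 * 2 ^ b + 1) * K + 3 * 2 ^ b + j : ℕ) := this
    exact_mod_cast hcast
  have hc3 : ((j : ℝ) + 100) ≤ 2 ^ b := by exact_mod_cast hjb
  have hj0 : (0 : ℝ) ≤ (j : ℝ) := by positivity
  -- cancel (3W+1) : prove the scaled inequality then divide
  have hmpos : (0 : ℝ) < 3 * 2 ^ b + 1 := by positivity
  rw [← mul_le_mul_iff_of_pos_right hmpos]
  nlinarith [mul_le_mul_of_nonneg_left hc1
      (show (0 : ℝ) ≤ 9 * 2 ^ b + 10 * ((j : ℝ) + 2) by positivity),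
    mul_nonneg (mul_nonneg (sub_nonneg.mpr hc3) hWpos.le) hWpos.le,
    mul_nonneg (sub_nonneg.mpr hc3) hWpos.le,
    mul_nonneg hj0 hWpos.le, sq_nonneg ((2 : ℝ) ^ b), hKpos.le]

lemma freq_liminf (j : ℕ) {ε : ℝ} (hε : 0 < ε) :
    ∃ᶠ k in Filter.atTop, (gammaJ j k : ℝ) / k ≤ 9 / 10 + ε := by
  rw [Filter.frequently_atTop]
  intro N
  obtain ⟨n, hn⟩ := exists_pow_lt_of_lt_one
    (show (0 : ℝ) < ε / ((j : ℝ) + 2) by positivity)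
    (show (1 : ℝ) / 2 < 1 by norm_num)
  set b := max n (max N (j + 100)) with hbdef
  have hbn : n ≤ b := le_max_left _ _
  have hbN : N ≤ b := le_trans (le_max_left _ _) (le_max_right _ _)
  have hbj : j + 100 ≤ b := le_trans (le_max_right _ _) (le_max_right _ _)
  have hjb : j + 100 ≤ 2 ^ b := le_trans hbj (Nat.le_of_lt (Nat.lt_two_pow_self (n := b)))
  refine ⟨(4 ^ (b + 1) - 2 ^ (b + 1) - j) / (3 * 2 ^ b + 1) + 2 ^ (b + 1), ?_, ?_⟩
  · -- ≥ N
    have h1 : N ≤ 2 ^ (b + 1) :=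
      le_trans (le_trans hbN (Nat.le_of_lt (Nat.lt_two_pow_self (n := b))))
        (Nat.pow_le_pow_right (by norm_num) (Nat.le_succ b))
    exact le_trans h1 (Nat.le_add_left _ _)
  · refine le_trans (RB j b hjb) ?_
    have htail : ((j : ℝ) + 2) / 2 ^ b ≤ ε := by
      have h1 : ((1 : ℝ) / 2) ^ b ≤ (1 / 2) ^ n :=
        pow_le_pow_of_le_one (by norm_num) (by norm_num) hbn
      have h2 : ((1 : ℝ) / 2) ^ b < ε / ((j : ℝ) + 2) := lt_of_le_of_lt h1 hn
      have h3 : ((1 : ℝ) / 2) ^ b = 1 / 2 ^ b := by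
        rw [div_pow]
        norm_num
      have hj2 : (0 : ℝ) < (j : ℝ) + 2 := by positivity
      rw [h3] at h2
      calc ((j : ℝ) + 2) / 2 ^ b = ((j : ℝ) + 2) * (1 / 2 ^ b) := by ring
      _ ≤ ((j : ℝ) + 2) * (ε / ((j : ℝ) + 2)) := by
          apply mul_le_mul_of_nonneg_left h2.le hj2.le
      _ = ε := by field_simp
    linarith

theorem gamma_liminf_limsup_upper' (j : ℕ) :
    Filter.liminf (fun k : ℕ => (gammaJ j k : ℝ) / k) Filter.atTop ≤ (9 / 10 : ℝ) ∧
    Filter.limsup (fun k : ℕ => (gammaJ j k : ℝ) / k) Filter.atTop ≤ (3 / 2 : ℝ) := by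
  have hbdd : Filter.IsBoundedUnder (· ≥ ·) Filter.atTop
      (fun k : ℕ => (gammaJ j k : ℝ) / k) :=
    ⟨0, by
      rw [Filter.eventually_map]
      exact Filter.Eventually.of_forall fun k =>
        div_nonneg (Nat.cast_nonneg _) (Nat.cast_nonneg _)⟩
  constructor
  · refine le_of_forall_gt_imp_ge_of_dense fun c hc => ?_
    have hε : (0 : ℝ) < c - 9 / 10 := by linarith
    have hfreq := freq_liminf j hε
    have : ∃ᶠ k in Filter.atTop, (gammaJ j k : ℝ) / k ≤ c := by
      refine hfreq.mono fun k hk => ?_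
      linarith
    exact Filter.liminf_le_of_frequently_le this hbdd
  · have hcob : Filter.IsCoboundedUnder (· ≤ ·) Filter.atTop
        (fun k : ℕ => (gammaJ j k : ℝ) / k) :=
      Filter.IsBoundedUnder.isCoboundedUnder_le hbdd
    exact Filter.limsup_le_of_le hcob (ev_ratio j)

end TMAux

theorem gamma_liminf_limsup_upper (j : ℕ) :
    Filter.liminf (fun k : ℕ => (gammaJ j k : ℝ) / k) Filter.atTop ≤ (9 / 10 : ℝ) ∧
    Filter.limsup (fun k : ℕ => (gammaJ j k : ℝ) / k) Filter.atTop ≤ (3 / 2 : ℝ) :=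
  TMAux.gamma_liminf_limsup_upper' j
end

section
/- Let j be a nonnegative integer, let k ≥ 3 be an integer, and let m ≥ 3 be an odd positive integer such that the j-fix of the Thue–Morse word t of length km is not a k-anti-power. Let δ(m) = ⌈log₂(m/3)⌉, i.e., δ(m) is the least integer δ with m ≤ 3·2^δ. Then k − 1 ≥ 2^{δ(m)}. -/
private def f (n : ℕ) : ℕ := ((Nat.digits 2 n).sum) % 2

lemma f_lt_two (n : ℕ) : f n < 2 := Nat.mod_lt _ (by norm_num)

lemma f_two_mul (n : ℕ) : f (2 * n) = f n := by
  rcases Nat.eq_zero_or_pos n with h | h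
  · simp [f, h]
  · unfold f
    rw [Nat.digits_def' (by norm_num : 1 < 2) (by omega)]
    have h1 : 2 * n % 2 = 0 := by omega
    have h2 : 2 * n / 2 = n := by omega
    rw [h1, h2]
    simp [Nat.add_mod]

lemma f_two_mul_add_one (n : ℕ) : f (2 * n + 1) = (f n + 1) % 2 := by
  unfold f
  rw [Nat.digits_def' (by norm_num : 1 < 2) (by omega)]
  have h1 : (2 * n + 1) % 2 = 1 := by omega
  have h2 : (2 * n + 1) / 2 = n := by omega
  rw [h1, h2]
  simp [List.sum_cons, Nat.add_mod, Nat.add_comm]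

lemma no_AAA (n : ℕ) (h1 : f n = f (n + 1)) (h2 : f (n + 1) = f (n + 2)) : False := by
  rcases Nat.even_or_odd n with ⟨c, hc⟩ | ⟨c, hc⟩
  · subst hc
    rw [show c + c = 2 * c by ring] at h1
    rw [show 2 * c + 1 = 2 * c + 1 by ring] at h1
    rw [f_two_mul, f_two_mul_add_one] at h1
    have := f_lt_two c; omega
  · subst hc
    rw [show 2 * c + 1 + 1 = 2 * (c + 1) by ring, show 2 * c + 1 + 2 = 2 * (c + 1) + 1 by ring,
      f_two_mul, f_two_mul_add_one] at h2
    have := f_lt_two (c + 1); omega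

lemma base4 (c q : ℕ) (h : ∀ i < 4, f (2 * c + i) = f (2 * q + 1 + i)) : False := by
  have e0 := h 0 (by norm_num)
  have e1 := h 1 (by norm_num)
  have e2 := h 2 (by norm_num)
  have e3 := h 3 (by norm_num)
  rw [show 2 * c + 0 = 2 * c by ring, show 2 * q + 1 + 0 = 2 * q + 1 by ring,
    f_two_mul, f_two_mul_add_one] at e0
  rw [show 2 * c + 1 = 2 * c + 1 by ring, show 2 * q + 1 + 1 = 2 * (q + 1) by ring,
    f_two_mul, f_two_mul_add_one] at e1
  rw [show 2 * c + 2 = 2 * (c + 1) by ring, show 2 * q + 1 + 2 = 2 * (q + 1) + 1 by ring,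
    f_two_mul, f_two_mul_add_one] at e2
  rw [show 2 * c + 3 = 2 * (c + 1) + 1 by ring, show 2 * q + 1 + 3 = 2 * (q + 2) by ring,
    f_two_mul, f_two_mul_add_one] at e3
  have hu := f_lt_two q
  have hv := f_lt_two (q + 1)
  have hw := f_lt_two (q + 2)
  have hx := f_lt_two c
  have hy := f_lt_two (c + 1)
  have hq : f q = f (q + 1) := by omega
  have hq' : f (q + 1) = f (q + 2) := by omega
  exact no_AAA q hq hq'

lemma keyE : ∀ s κ a ℓ : ℕ, Odd κ → (∀ i < ℓ, f (a + i) = f (a + κ * 2 ^ s + i)) →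
    ℓ ≤ 3 * 2 ^ s := by
  intro s
  induction s with
  | zero =>
    intro κ a ℓ hκ h
    by_contra hlt
    push_neg at hlt
    simp only [pow_zero, mul_one] at h hlt
    have h4 : ∀ i < 4, f (a + i) = f (a + κ + i) := fun i hi => h i (by omega)
    rcases Nat.even_or_odd a with ⟨c, hc⟩ | ⟨c, hc⟩
    · -- a = 2c even, a + κ odd
      obtain ⟨q, hq⟩ : Odd (a + κ) := by
        rcases hκ with ⟨t, ht⟩; exact ⟨c + t, by omega⟩
      exact base4 c q (fun i hi => by
        rw [show 2 * c + i = a + i by omega, show 2 * q + 1 + i = a + κ + i by omega]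
        exact h4 i hi)
    · -- a odd, a + κ even
      obtain ⟨c, hc2⟩ : Even (a + κ) := by
        rcases hκ with ⟨t, ht⟩; exact ⟨c + t + 1, by omega⟩
      exact base4 c ((a - 1) / 2) (fun i hi => by
        rw [show 2 * c + i = a + κ + i by omega, show 2 * ((a - 1) / 2) + 1 + i = a + i by omega]
        exact (h4 i hi).symm)
  | succ s ih =>
    intro κ a ℓ hκ h
    have key : ∀ c : ℕ, (∀ i < (ℓ + 1) / 2, f (c + i) = f (c + κ * 2 ^ s + i)) →
        ℓ ≤ 3 * 2 ^ (s + 1) := by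
      intro c hc
      have := ih κ c ((ℓ + 1) / 2) hκ hc
      have : (ℓ + 1) / 2 ≤ 3 * 2 ^ s := this
      rw [pow_succ]
      omega
    rcases Nat.even_or_odd a with ⟨c, hc⟩ | ⟨c, hc⟩
    · apply key c
      intro i hi
      have h2i := h (2 * i) (by omega)
      rw [show a + 2 * i = 2 * (c + i) by omega,
        show a + κ * 2 ^ (s + 1) + 2 * i = 2 * (c + κ * 2 ^ s + i) by subst hc; rw [pow_succ]; ring,
        f_two_mul, f_two_mul] at h2i
      exact h2i
    · apply key c
      intro i hi
      have h2i := h (2 * i) (by omega)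
      rw [show a + 2 * i = 2 * (c + i) + 1 by omega,
        show a + κ * 2 ^ (s + 1) + 2 * i = 2 * (c + κ * 2 ^ s + i) + 1 by subst hc; rw [pow_succ]; ring,
        f_two_mul_add_one, f_two_mul_add_one] at h2i
      have := f_lt_two (c + i)
      have := f_lt_two (c + κ * 2 ^ s + i)
      omega

lemma tm_succ_s7 (n : ℕ) : tm (n + 1) = f n := rfl

lemma block_main (j m r₁ r₂ : ℕ) (hlt : r₁ < r₂)
    (heq : tmBlock j m r₁ = tmBlock j m r₂) :
    ∀ i < m, f (j + r₁ * m + i) = f (j + r₁ * m + (r₂ - r₁) * m + i) := by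
  intro i hi
  have h1 : (tmBlock j m r₁)[i]? = (tmBlock j m r₂)[i]? := by rw [heq]
  simp only [tmBlock, List.getElem?_map, List.getElem?_range, hi, if_pos] at h1
  have h2 : tm (j + r₁ * m + i + 1) = tm (j + r₂ * m + i + 1) := by
    simpa using h1
  rw [tm_succ_s7, tm_succ_s7] at h2
  rw [show j + r₁ * m + (r₂ - r₁) * m + i = j + r₂ * m + i by
    have : r₁ * m + (r₂ - r₁) * m = r₂ * m := by
      rw [← Nat.add_mul]; congr 1; omega
    omega]
  exact h2

theorem two_pow_delta_le (j k m δ : ℕ) (hk : 3 ≤ k) (hm : 3 ≤ m) (hodd : Odd m)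
    (hap : ¬ IsAntipowerJfix j k m)
    (hδ : IsLeast {d : ℕ | m ≤ 3 * 2 ^ d} δ) :
    2 ^ δ ≤ k - 1 := by
  unfold IsAntipowerJfix at hap
  push_neg at hap
  obtain ⟨r₁, hr₁, r₂, hr₂, heq, hne⟩ := hap
  -- WLOG r₁ < r₂
  obtain ⟨a, b, ha, hb, hab, hbeq⟩ : ∃ a b, a < k ∧ b < k ∧ a < b ∧
      tmBlock j m a = tmBlock j m b := by
    rcases Nat.lt_or_ge r₁ r₂ with h | h
    · exact ⟨r₁, r₂, hr₁, hr₂, h, heq⟩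
    · exact ⟨r₂, r₁, hr₂, hr₁, by omega, heq.symm⟩
  have hpt := block_main j m a b hab hbeq
  set d := b - a with hd
  have hd0 : d ≠ 0 := by omega
  obtain ⟨s, κ, hκ, hdk⟩ := Nat.exists_eq_two_pow_mul_odd hd0
  have hgap : d * m = (κ * m) * 2 ^ s := by rw [hdk]; ring
  have hκm : Odd (κ * m) := hκ.mul hodd
  have hE := keyE s (κ * m) (j + a * m) m hκm (by
    intro i hi
    have := hpt i hi
    rwa [hgap] at this)
  -- m ≤ 3 * 2 ^ s, so δ ≤ s
  have hδs : δ ≤ s := hδ.2 hE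
  have h2d : 2 ^ δ ≤ d := by
    calc 2 ^ δ ≤ 2 ^ s := Nat.pow_le_pow_right (by norm_num) hδs
    _ ≤ 2 ^ s * κ := Nat.le_mul_of_pos_right _ hκ.pos
    _ = d := hdk.symm
  omega
end

section
/- For every integer k ≥ 3, the set of even positive integers m such that the prefix of the Thue–Morse word of length km is not a k-anti-power is unbounded; that is, for every N there exists an even positive integer m > N such that t_1 t_2 ⋯ t_{km} is not a k-anti-power. -/
lemma digits_sum_pow_add : ∀ n i : ℕ, i < 2 ^ n →
    (Nat.digits 2 (2 ^ n + i)).sum = (Nat.digits 2 i).sum + 1 := by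
  intro n
  induction n with
  | zero =>
    intro i hi
    interval_cases i
    simp
  | succ n ih =>
    intro i hi
    have hpos : 0 < 2 ^ (n + 1) + i := by positivity
    rw [Nat.digits_def' (by norm_num : 1 < 2) hpos]
    have hmod : (2 ^ (n + 1) + i) % 2 = i % 2 := by
      omega
    have hdiv : (2 ^ (n + 1) + i) / 2 = 2 ^ n + i / 2 := by
      omega
    have hi2 : i / 2 < 2 ^ n := by omega
    rw [hmod, hdiv]
    rcases Nat.eq_zero_or_pos i with h0 | h0
    · subst h0
      simpa using ih 0 (by positivity)
    · rw [Nat.digits_def' (by norm_num : 1 < 2) h0]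
      simp only [List.sum_cons]
      rw [ih (i / 2) hi2]
      omega

lemma tm_block_eq (n i : ℕ) (hi : i < 2 ^ n) :
    tm (2 ^ n + i + 1) = tm (2 ^ (n + 1) + i + 1) := by
  unfold tm
  have h1 : 2 ^ n + i + 1 - 1 = 2 ^ n + i := by omega
  have h2 : 2 ^ (n + 1) + i + 1 - 1 = 2 ^ (n + 1) + i := by omega
  rw [h1, h2, digits_sum_pow_add n i hi,
    digits_sum_pow_add (n + 1) i (lt_of_lt_of_le hi (by gcongr <;> omega))]

theorem even_non_antipower_unbounded (k : ℕ) (hk : 3 ≤ k) (N : ℕ) :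
    ∃ m : ℕ, Even m ∧ 0 < m ∧ N < m ∧ ¬ IsAntipowerJfix 0 k m := by
  refine ⟨2 ^ (N + 1), ?_, by positivity, ?_, ?_⟩
  · exact (Nat.even_pow).2 ⟨even_two, by omega⟩
  · calc N < 2 ^ N := Nat.lt_two_pow_self (n := N)
      _ ≤ 2 ^ (N + 1) := Nat.pow_le_pow_right (by norm_num) (by omega)
  · intro h
    have := h 1 (by omega) 2 (by omega) ?_
    · omega
    · unfold tmBlock
      apply List.map_congr_left
      intro i hi
      simp only [List.mem_range] at hi
      have : (0 + 1 * 2 ^ (N + 1) + i + 1) = 2 ^ (N + 1) + i + 1 := by ring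
      rw [this]
      have : (0 + 2 * 2 ^ (N + 1) + i + 1) = 2 ^ (N + 2) + i + 1 := by ring
      rw [this]
      exact tm_block_eq (N + 1) i hi
end

section
/- Let j be a nonnegative integer and suppose r, m, ℓ, h, p, q are nonnegative integers with ℓ ≥ 2 satisfying: h < 2^{ℓ−2}; 2 ≤ m < 2^ℓ; r·m + j = 2^{ℓ+1}·p + 2^{ℓ−1} + h; (r+1)·m + j ≤ 2^{ℓ+1}·p + 5·2^{ℓ−2}; (r + 2^{ℓ−2})·m + j = 2^{ℓ+1}·q + 3·2^{ℓ−2} + h; and t_{p+1} ≠ t_{q+1}. Then the two blocks ⟨rm + j + 1, (r+1)m + j⟩ and ⟨(r + 2^{ℓ−2})m + j + 1, (r + 2^{ℓ−2} + 1)m + j⟩ of the Thue–Morse word are equal, and consequently 𝔎_j(m) ≤ r + 2^{ℓ−2} + 1. -/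
lemma sdig_two_mul_add (a b : ℕ) (hb : b < 2) :
    (Nat.digits 2 (2 * a + b)).sum = b + (Nat.digits 2 a).sum := by
  rcases Nat.eq_zero_or_pos (2 * a + b) with h | h
  · have ha : a = 0 := by omega
    have hb0 : b = 0 := by omega
    simp [ha, hb0]
  · rw [Nat.digits_def' (by norm_num : 1 < 2) h]
    have h1 : (2 * a + b) % 2 = b := by omega
    have h2 : (2 * a + b) / 2 = a := by omega
    rw [h1, h2, List.sum_cons]

lemma sdig_pow_mul_add (k p u : ℕ) (hu : u < 2 ^ k) :
    (Nat.digits 2 (2 ^ k * p + u)).sum = (Nat.digits 2 p).sum + (Nat.digits 2 u).sum := by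
  induction k generalizing u with
  | zero =>
    interval_cases u
    simp
  | succ k ih =>
    have h1 : 2 ^ (k + 1) * p + u = 2 * (2 ^ k * p + u / 2) + u % 2 := by
      have hd := Nat.div_add_mod u 2
      have : 2 ^ (k + 1) * p = 2 * (2 ^ k * p) := by ring
      omega
    have hu2 : u / 2 < 2 ^ k := by
      have : 2 ^ (k + 1) = 2 * 2 ^ k := by ring
      omega
    have h2 : (Nat.digits 2 u).sum = u % 2 + (Nat.digits 2 (u / 2)).sum := by
      conv_lhs => rw [← Nat.div_add_mod u 2]
      exact sdig_two_mul_add _ _ (Nat.mod_lt _ (by norm_num))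
    rw [h1, sdig_two_mul_add _ _ (Nat.mod_lt _ (by norm_num)), ih (u / 2) hu2]
    omega

lemma tm_eq (n : ℕ) : tm (n + 1) = (Nat.digits 2 n).sum % 2 := by simp [tm]

lemma tmFlip (e w : ℕ) (hw : w < 3 * 2 ^ e) :
    ((Nat.digits 2 (2 ^ (e + 1) + w)).sum + (Nat.digits 2 (3 * 2 ^ e + w)).sum) % 2 = 1 := by
  have hP : 0 < 2 ^ e := Nat.pow_pos (by norm_num)
  have hpe : (2 : ℕ) ^ (e + 1) = 2 ^ e * 2 := pow_succ 2 e
  rcases lt_or_ge w (2 ^ e) with hc1 | hc1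
  · rw [show 2 ^ (e + 1) + w = 2 ^ e * 2 + w by omega, sdig_pow_mul_add e 2 w hc1,
        show 3 * 2 ^ e + w = 2 ^ e * 3 + w by omega, sdig_pow_mul_add e 3 w hc1]
    have d2 : (Nat.digits 2 2).sum = 1 := by norm_num [Nat.digits_def' (by norm_num : 1 < 2)]
    have d3 : (Nat.digits 2 3).sum = 2 := by norm_num [Nat.digits_def' (by norm_num : 1 < 2)]
    omega
  · rcases lt_or_ge w (2 * 2 ^ e) with hc2 | hc2
    · rw [show 2 ^ (e + 1) + w = 2 ^ e * 3 + (w - 2 ^ e) by omega,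
          sdig_pow_mul_add e 3 _ (by omega),
          show 3 * 2 ^ e + w = 2 ^ e * 4 + (w - 2 ^ e) by omega,
          sdig_pow_mul_add e 4 _ (by omega)]
      have d3 : (Nat.digits 2 3).sum = 2 := by norm_num [Nat.digits_def' (by norm_num : 1 < 2)]
      have d4 : (Nat.digits 2 4).sum = 1 := by norm_num [Nat.digits_def' (by norm_num : 1 < 2)]
      omega
    · rw [show 2 ^ (e + 1) + w = 2 ^ e * 4 + (w - 2 * 2 ^ e) by omega,
          sdig_pow_mul_add e 4 _ (by omega),
          show 3 * 2 ^ e + w = 2 ^ e * 5 + (w - 2 * 2 ^ e) by omega,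
          sdig_pow_mul_add e 5 _ (by omega)]
      have d4 : (Nat.digits 2 4).sum = 1 := by norm_num [Nat.digits_def' (by norm_num : 1 < 2)]
      have d5 : (Nat.digits 2 5).sum = 2 := by norm_num [Nat.digits_def' (by norm_num : 1 < 2)]
      omega

theorem blocks_eq_of_conditions (j r m ℓ h p q : ℕ) (hℓ : 2 ≤ ℓ)
    (h1 : h < 2 ^ (ℓ - 2)) (h2 : 2 ≤ m) (h2' : m < 2 ^ ℓ)
    (h3 : r * m + j = 2 ^ (ℓ + 1) * p + 2 ^ (ℓ - 1) + h)
    (h4 : (r + 1) * m + j ≤ 2 ^ (ℓ + 1) * p + 5 * 2 ^ (ℓ - 2))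
    (h5 : (r + 2 ^ (ℓ - 2)) * m + j = 2 ^ (ℓ + 1) * q + 3 * 2 ^ (ℓ - 2) + h)
    (h6 : tm (p + 1) ≠ tm (q + 1)) :
    tmBlock j m r = tmBlock j m (r + 2 ^ (ℓ - 2)) ∧ KJ j m ≤ r + 2 ^ (ℓ - 2) + 1 := by
  obtain ⟨e, rfl⟩ : ∃ e, ℓ = e + 2 := ⟨ℓ - 2, by omega⟩
  have he2 : e + 2 - 2 = e := by omega
  have he1 : e + 2 - 1 = e + 1 := by omega
  rw [he2] at h1 h4 h5 ⊢
  rw [he1] at h3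
  rw [add_mul, one_mul] at h4
  rw [add_mul] at h5
  have hPe : 0 < 2 ^ e := Nat.pow_pos (by norm_num)
  have hp1 : (2 : ℕ) ^ (e + 1) = 2 * 2 ^ e := by ring
  have hp3 : (2 : ℕ) ^ (e + 2 + 1) = 8 * 2 ^ e := by ring
  -- bound: h + m ≤ 3 * 2^e
  have hhm : h + m ≤ 3 * 2 ^ e := by omega
  have key : ∀ i < m, tm (j + r * m + i + 1) = tm (j + (r + 2 ^ e) * m + i + 1) := by
    intro i hi
    have hw : h + i < 3 * 2 ^ e := by omega
    have hA : j + r * m + i = 2 ^ (e + 2 + 1) * p + (2 ^ (e + 1) + (h + i)) := by omega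
    have hB : j + (r + 2 ^ e) * m + i = 2 ^ (e + 2 + 1) * q + (3 * 2 ^ e + (h + i)) := by
      rw [add_mul]; omega
    have hu : 2 ^ (e + 1) + (h + i) < 2 ^ (e + 2 + 1) := by omega
    have hv : 3 * 2 ^ e + (h + i) < 2 ^ (e + 2 + 1) := by omega
    rw [tm_eq, tm_eq, hA, hB, sdig_pow_mul_add _ _ _ hu, sdig_pow_mul_add _ _ _ hv]
    rw [tm_eq, tm_eq] at h6
    have hf := tmFlip e (h + i) hw
    omega
  have hblocks : tmBlock j m r = tmBlock j m (r + 2 ^ e) := by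
    unfold tmBlock
    refine List.map_congr_left fun i hi => ?_
    exact key i (List.mem_range.mp hi)
  refine ⟨hblocks, ?_⟩
  have hmem : (r + 2 ^ e + 1) ∈ {k : ℕ | 0 < k ∧ ¬ IsAntipowerJfix j k m} := by
    refine ⟨by omega, fun hAP => ?_⟩
    have := hAP r (by omega) (r + 2 ^ e) (by omega) hblocks
    omega
  exact Nat.sInf_le hmem
end

section
/- Let j be a nonnegative integer, m ≥ 2 an integer, and ℓ = ⌈log₂(m+j)⌉ (the least nonnegative integer with m + j ≤ 2^ℓ). Suppose there exists a positive integer s such that t_s = t_{m+s} and t_{s+1} = t_{m+s+1}. Then, as real numbers, 𝔎_j(m) < 2^ℓ + (2^ℓ·(s+1) − j)/m. -/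
/-- The 0-indexed Thue–Morse parity: `F n` is the parity of the number of 1's in the
binary expansion of `n`, so that `tm (n + 1) = F n`. -/
def F (n : ℕ) : ℕ := ((Nat.digits 2 n).sum) % 2

lemma tm_succ_s11 (a : ℕ) : tm (a + 1) = F a := rfl

lemma F_two_mul (n : ℕ) : F (2 * n) = F n := by
  rcases Nat.eq_zero_or_pos n with h | h
  · simp [h]
  · unfold F
    rw [Nat.digits_def' (by norm_num : 1 < 2) (by omega : 0 < 2 * n)]
    simp

lemma F_two_mul_add_one (n : ℕ) : F (2 * n + 1) = (F n + 1) % 2 := by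
  unfold F
  rw [Nat.digits_def' (by norm_num : 1 < 2) (by omega : 0 < 2 * n + 1)]
  have h1 : (2 * n + 1) % 2 = 1 := by omega
  have h2 : (2 * n + 1) / 2 = n := by omega
  rw [h1, h2]
  simp [Nat.add_mod, Nat.add_comm]

/-- A pair of consecutive agreements `F u = F (m + u)`, `F (u+1) = F (m + u + 1)`
propagates under the Thue–Morse doubling rules: after `ℓ` doublings one gets agreement
`F i = F (2^ℓ m + i)` on the whole window `2^ℓ u ≤ i < 2^ℓ (u + 2)` of length `2^(ℓ+1)`. -/
lemma key (m u : ℕ) (h1 : F u = F (m + u)) (h2 : F (u + 1) = F (m + u + 1)) :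
    ∀ ℓ i, 2 ^ ℓ * u ≤ i → i < 2 ^ ℓ * (u + 2) → F i = F (2 ^ ℓ * m + i) := by
  intro ℓ
  induction ℓ with
  | zero =>
    intro i hiL hiU
    simp only [pow_zero, one_mul] at *
    have : i = u ∨ i = u + 1 := by omega
    rcases this with rfl | rfl
    · exact h1
    · exact h2
  | succ ℓ ih =>
    intro i hiL hiU
    have hq2 : 2 ^ ℓ * u ≤ i / 2 := by
      rw [Nat.le_div_iff_mul_le (by norm_num : 0 < 2)]
      calc 2 ^ ℓ * u * 2 = 2 ^ (ℓ + 1) * u := by ring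
        _ ≤ i := hiL
    have hq3 : i / 2 < 2 ^ ℓ * (u + 2) := by
      rw [Nat.div_lt_iff_lt_mul (by norm_num : 0 < 2)]
      calc i < 2 ^ (ℓ + 1) * (u + 2) := hiU
        _ = 2 ^ ℓ * (u + 2) * 2 := by ring
    have hIH := ih (i / 2) hq2 hq3
    rcases Nat.mod_two_eq_zero_or_one i with hb | hb
    · have hi : i = 2 * (i / 2) := by omega
      rw [hi]
      have e : 2 ^ (ℓ + 1) * m + 2 * (i / 2) = 2 * (2 ^ ℓ * m + i / 2) := by ring
      rw [e, F_two_mul, F_two_mul]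
      exact hIH
    · have hi : i = 2 * (i / 2) + 1 := by omega
      rw [hi]
      have e : 2 ^ (ℓ + 1) * m + (2 * (i / 2) + 1) = 2 * (2 ^ ℓ * m + i / 2) + 1 := by ring
      rw [e, F_two_mul_add_one, F_two_mul_add_one, hIH]

theorem KJ_lt_of_repeated_pair (j m ℓ s : ℕ) (hm : 2 ≤ m)
    (hℓ : IsLeast {l : ℕ | m + j ≤ 2 ^ l} ℓ)
    (hs : 0 < s) (h1 : tm s = tm (m + s)) (h2 : tm (s + 1) = tm (m + s + 1)) :
    (KJ j m : ℝ) < 2 ^ ℓ + ((2 : ℝ) ^ ℓ * (s + 1) - j) / m := by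
  obtain ⟨u, rfl⟩ : ∃ u, s = u + 1 := ⟨s - 1, by omega⟩
  have h1' : F u = F (m + u) := h1
  have h2' : F (u + 1) = F (m + u + 1) := h2
  have key' := key m u h1' h2' ℓ
  have hPm : m + j ≤ 2 ^ ℓ := hℓ.1
  have hP1 : 0 < 2 ^ ℓ := Nat.two_pow_pos ℓ
  set r₁ := (2 ^ ℓ * u - j + m - 1) / m with hr₁
  have hAB : 2 ^ ℓ * u ≤ j + r₁ * m ∧ j + r₁ * m + m < 2 ^ ℓ * u + 2 * 2 ^ ℓ := by
    have h0 : r₁ * m = 0 ∨ m ≤ r₁ * m := by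
      rcases Nat.eq_zero_or_pos r₁ with h | h
      · left; rw [h, zero_mul]
      · right; exact Nat.le_mul_of_pos_left m h
    have hdm : r₁ * m + (2 ^ ℓ * u - j + m - 1) % m = 2 ^ ℓ * u - j + m - 1 := by
      rw [mul_comm]; exact Nat.div_add_mod _ _
    have hmod : (2 ^ ℓ * u - j + m - 1) % m < m := Nat.mod_lt _ (by omega)
    clear_value r₁
    clear hr₁
    set rem := (2 ^ ℓ * u - j + m - 1) % m with hrem
    clear_value rem
    clear hrem
    set x := r₁ * m with hx
    clear_value x
    clear hx
    set D := 2 ^ ℓ * u with hD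
    clear_value D
    clear hD
    set P := 2 ^ ℓ with hP
    clear_value P
    clear hP
    omega
  have hblocks : tmBlock j m r₁ = tmBlock j m (r₁ + 2 ^ ℓ) := by
    unfold tmBlock
    refine List.map_congr_left fun i hi => ?_
    have him : i < m := List.mem_range.mp hi
    have e : j + (r₁ + 2 ^ ℓ) * m + i + 1 = (2 ^ ℓ * m + (j + r₁ * m + i)) + 1 := by ring
    rw [e, tm_succ_s11 (j + r₁ * m + i), tm_succ_s11]
    refine key' (j + r₁ * m + i) (hAB.1.trans (Nat.le_add_right _ i)) ?_
    have h3 : j + r₁ * m + i < j + r₁ * m + m := Nat.add_lt_add_left him _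
    have h4 : 2 ^ ℓ * (u + 2) = 2 ^ ℓ * u + 2 * 2 ^ ℓ := by ring
    rw [h4]
    exact lt_trans h3 hAB.2
  have hnot : ¬ IsAntipowerJfix j (r₁ + 2 ^ ℓ + 1) m := by
    intro H
    have h := H r₁ (Nat.lt_succ_of_le (Nat.le_add_right _ _)) (r₁ + 2 ^ ℓ)
      (Nat.lt_succ_self _) hblocks
    exact absurd h (Nat.ne_of_lt (Nat.lt_add_of_pos_right hP1))
  have hK : KJ j m ≤ r₁ + 2 ^ ℓ + 1 := by
    unfold KJ
    exact Nat.sInf_le ⟨Nat.succ_pos _, hnot⟩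
  have hm0 : (0 : ℝ) < m := by exact_mod_cast (by omega : 0 < m)
  have hc : (j : ℝ) + r₁ * m + m < 2 ^ ℓ * u + 2 * 2 ^ ℓ := by exact_mod_cast hAB.2
  calc (KJ j m : ℝ) ≤ ((r₁ + 2 ^ ℓ + 1 : ℕ) : ℝ) := by exact_mod_cast hK
    _ < 2 ^ ℓ + ((2 : ℝ) ^ ℓ * (↑(u + 1) + 1) - j) / m := by
        push_cast
        have hdiv : ((r₁ : ℝ) + 1) < ((2 : ℝ) ^ ℓ * ((u : ℝ) + 1 + 1) - j) / m := by
          rw [lt_div_iff₀ hm0]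
          nlinarith [hc]
        linarith
end

section
/- Let m = 2^L·k where L and k are positive integers, let j be a nonnegative integer, and let ℓ = ⌈log₂(m+j)⌉ (the least nonnegative integer with m + j ≤ 2^ℓ). Then, as real numbers, 𝔎_j(m) < 2^{ℓ+1} + (2^{ℓ+1} − j)/m. -/
lemma digits_len_le_of_lt_pow {x p : ℕ} (hx : x < 2 ^ p) :
    (Nat.digits 2 x).length ≤ p := by
  rcases Nat.eq_zero_or_pos x with rfl | hx0
  · simp
  · rw [Nat.digits_len 2 x one_lt_two hx0.ne']
    exact Nat.succ_le_of_lt (Nat.log_lt_of_lt_pow hx0.ne' hx)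

lemma sum_digits_add_pow_mul {x c p : ℕ} (hx : x < 2 ^ p) (hc : 0 < c) :
    (Nat.digits 2 (x + 2 ^ p * c)).sum = (Nat.digits 2 x).sum + (Nat.digits 2 c).sum := by
  obtain ⟨d, hd⟩ := Nat.exists_eq_add_of_le (digits_len_le_of_lt_pow hx)
  rw [hd, ← Nat.digits_append_zeroes_append_digits one_lt_two hc]
  simp

theorem KJ_lt_of_even (j L k m ℓ : ℕ) (hL : 0 < L) (hk : 0 < k)
    (hm : m = 2 ^ L * k)
    (hℓ : IsLeast {l : ℕ | m + j ≤ 2 ^ l} ℓ) :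
    (KJ j m : ℝ) < 2 ^ (ℓ + 1) + ((2 : ℝ) ^ (ℓ + 1) - j) / m := by
  have hm0 : 0 < m := by rw [hm]; exact Nat.mul_pos (Nat.two_pow_pos L) hk
  have hmj : m + j ≤ 2 ^ ℓ := hℓ.1
  have hLℓ : L ≤ ℓ := by
    have : 2 ^ L ≤ 2 ^ ℓ := le_trans (by nlinarith [Nat.one_le_iff_ne_zero.mpr hk.ne']) hmj
    exact (Nat.pow_le_pow_iff_right one_lt_two).mp this
  -- the two equal blocks
  have hrm : ∀ d : ℕ, 2 ^ (ℓ - L + d) * m = 2 ^ ℓ * (2 ^ d * k) := by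
    intro d
    rw [hm]
    calc 2 ^ (ℓ - L + d) * (2 ^ L * k) = 2 ^ (ℓ - L + d + L) * k := by rw [pow_add]; ring
      _ = 2 ^ (ℓ + d) * k := by rw [show ℓ - L + d + L = ℓ + d by omega]
      _ = 2 ^ ℓ * (2 ^ d * k) := by rw [pow_add]; ring
  have hblock : ∀ d : ℕ, tmBlock j m (2 ^ (ℓ - L + d)) =
      (List.range m).map fun i => ((Nat.digits 2 (j + i)).sum + (Nat.digits 2 (2 ^ d * k)).sum) % 2 := by
    intro d
    unfold tmBlock tm
    apply List.map_congr_left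
    intro i hi
    have him : i < m := List.mem_range.mp hi
    have h1 : j + 2 ^ (ℓ - L + d) * m + i + 1 - 1 = (j + i) + 2 ^ ℓ * (2 ^ d * k) := by
      rw [← hrm d]; omega
    rw [h1, sum_digits_add_pow_mul (by omega) (by positivity)]
  have hsum2 : (Nat.digits 2 (2 ^ 1 * k)).sum = (Nat.digits 2 (2 ^ 0 * k)).sum := by
    rw [Nat.digits_base_pow_mul one_lt_two hk]
    simp
  have heq : tmBlock j m (2 ^ (ℓ - L + 0)) = tmBlock j m (2 ^ (ℓ - L + 1)) := by
    rw [hblock 0, hblock 1, hsum2]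
  -- KJ is at most 2^(ℓ-L+1) + 1
  have hKJ : KJ j m ≤ 2 ^ (ℓ - L + 1) + 1 := by
    apply Nat.sInf_le
    constructor
    · positivity
    · intro h
      have h1 : 2 ^ (ℓ - L + 0) < 2 ^ (ℓ - L + 1) + 1 := by
        have := Nat.pow_lt_pow_right (a := 2) one_lt_two (show ℓ - L + 0 < ℓ - L + 1 by omega)
        omega
      have h2 : 2 ^ (ℓ - L + 1) < 2 ^ (ℓ - L + 1) + 1 := by omega
      have heq2 := h _ h1 _ h2 heq
      have hlt : 2 ^ (ℓ - L + 0) < 2 ^ (ℓ - L + 1) := Nat.pow_lt_pow_right one_lt_two (by omega)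
      omega
  -- numeric conclusion
  have hKJ2 : KJ j m ≤ 2 ^ (ℓ + 1) := by
    have h1 : 2 ^ (ℓ - L + 1) ≤ 2 ^ ℓ := Nat.pow_le_pow_right (by norm_num) (by omega)
    have h2 : 2 ^ ℓ + 1 ≤ 2 ^ (ℓ + 1) := by
      have : 1 ≤ 2 ^ ℓ := Nat.one_le_two_pow
      rw [pow_succ]; omega
    omega
  have hcast : (KJ j m : ℝ) ≤ 2 ^ (ℓ + 1) := by
    exact_mod_cast hKJ2
  have hjlt : (j : ℝ) < 2 ^ (ℓ + 1) := by
    have : j < 2 ^ (ℓ + 1) := by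
      have : 2 ^ ℓ < 2 ^ (ℓ + 1) := Nat.pow_lt_pow_right one_lt_two (by omega)
      omega
    exact_mod_cast this
  have hpos : (0 : ℝ) < ((2 : ℝ) ^ (ℓ + 1) - j) / m := by
    apply div_pos (by linarith) (by exact_mod_cast hm0)
  linarith
end
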